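/- arXiv:2306.02103 — 10 statements merged into one kernel-verified Lean document; each statement's English description precedes it below -/
import Mathlib

section
/- For all real φ and all ρ̄ > 0, the function Ψ_ρ̄(φ) := (2/3)|ρ̄+φ|^{3/2} - (2/3)ρ̄^{3/2} - ρ̄^{1/2}φ satisfies c|φ|²/√(ρ̄+|φ|) ≤ Ψ_ρ̄(φ) ≤ C|φ|²/√(ρ̄+|φ|) for some universal constants C > c > 0 independent of ρ̄ and φ. -/
open Real

lemma rpow32 (x : ℝ) (hx : 0 ≤ x) : x ^ ((3:ℝ)/2) = Real.sqrt x ^ 3 := by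
  rw [show (3:ℝ)/2 = (1/2)*3 by ring, Real.rpow_mul hx, ← Real.sqrt_eq_rpow,
    ← Real.rpow_natCast (Real.sqrt x) 3]
  norm_num

lemma caseA (a s : ℝ) (ha : 0 < a) (has : a ≤ s) :
    1/20 * (s^2 - a^2)^2 ≤ (2/3*s^3 - 2/3*a^3 - a*(s^2 - a^2)) * s ∧
    (2/3*s^3 - 2/3*a^3 - a*(s^2 - a^2)) * s ≤ 10 * (s^2 - a^2)^2 := by
  have hid : (2/3*s^3 - 2/3*a^3 - a*(s^2 - a^2)) * s = 1/3*(s-a)^2*(2*s+a)*s := by ring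
  have hs0 : 0 < s := ha.trans_le has
  constructor
  · rw [hid]
    have key : 1/20 * (s+a)^2 ≤ 1/3 * (2*s+a) * s := by nlinarith
    nlinarith [mul_le_mul_of_nonneg_left key (sq_nonneg (s-a))]
  · rw [hid]
    have key : 1/3 * (2*s+a) * s ≤ 10 * (s+a)^2 := by nlinarith
    nlinarith [mul_le_mul_of_nonneg_left key (sq_nonneg (s-a))]

lemma caseB (a s t : ℝ) (ha : 0 < a) (hs0 : 0 ≤ s) (hsa : s ≤ a)
    (hta : a ≤ t) (ht2a : t ≤ 2*a) :
    1/20 * (a^2 - s^2)^2 ≤ (2/3*s^3 - 2/3*a^3 - a*(s^2 - a^2)) * t ∧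
    (2/3*s^3 - 2/3*a^3 - a*(s^2 - a^2)) * t ≤ 10 * (a^2 - s^2)^2 := by
  have hid : (2/3*s^3 - 2/3*a^3 - a*(s^2 - a^2)) * t = 1/3*(a-s)^2*(2*s+a)*t := by ring
  constructor
  · rw [hid]
    have key : 1/20 * (a+s)^2 ≤ 1/3 * (2*s+a) * t := by
      nlinarith [mul_nonneg hs0 (sub_nonneg.mpr hta), mul_nonneg hs0 (hs0.trans hsa)]
    nlinarith [mul_le_mul_of_nonneg_left key (sq_nonneg (a-s))]
  · rw [hid]
    have key : 1/3 * (2*s+a) * t ≤ 10 * (a+s)^2 := by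
      nlinarith [mul_nonneg (sub_nonneg.mpr hsa) (sub_nonneg.mpr ht2a),
        mul_nonneg hs0 (sub_nonneg.mpr ht2a), mul_nonneg ha.le hs0]
    nlinarith [mul_le_mul_of_nonneg_left key (sq_nonneg (a-s))]

lemma caseC (a u t : ℝ) (ha : 0 < a) (hu0 : 0 ≤ u)
    (hta : a ≤ t) (htu : u ≤ t) (htub : t ≤ 2*a + u) :
    1/20 * (a^2 + u^2)^2 ≤ (2/3*u^3 + 1/3*a^3 + a*u^2) * t ∧
    (2/3*u^3 + 1/3*a^3 + a*u^2) * t ≤ 10 * (a^2 + u^2)^2 := by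
  constructor
  · nlinarith [mul_nonneg (mul_nonneg (mul_nonneg hu0 hu0) hu0) (sub_nonneg.mpr htu),
      mul_nonneg (mul_nonneg (mul_nonneg ha.le ha.le) ha.le) (sub_nonneg.mpr hta),
      mul_nonneg (mul_nonneg (mul_nonneg ha.le hu0) hu0) (sub_nonneg.mpr hta),
      mul_nonneg (mul_nonneg ha.le ha.le) (mul_nonneg hu0 hu0)]
  · have hpsi : 0 ≤ 2/3*u^3 + 1/3*a^3 + a*u^2 := by positivity
    have key : (2/3*u^3 + 1/3*a^3 + a*u^2) * t ≤ (2/3*u^3 + 1/3*a^3 + a*u^2) * (2*a+u) :=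
      mul_le_mul_of_nonneg_left htub hpsi
    nlinarith [sq_nonneg (a-u), sq_nonneg (a+u), sq_nonneg (a^2-u^2),
      mul_nonneg (mul_nonneg ha.le hu0) (sq_nonneg (a-u)),
      mul_nonneg (mul_nonneg ha.le ha.le) (sq_nonneg (a-u)),
      mul_nonneg (mul_nonneg hu0 hu0) (sq_nonneg (a-u))]

set_option maxHeartbeats 1000000 in
/-- universal two-sided bound on `Ψ_ρ̄`. -/
theorem psi_two_sided_bound :
    ∃ c C : ℝ, 0 < c ∧ c < C ∧
      ∀ ρbar φ : ℝ, 0 < ρbar →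
        c * |φ| ^ 2 / Real.sqrt (ρbar + |φ|) ≤
          (2 / 3) * |ρbar + φ| ^ ((3 : ℝ) / 2) - (2 / 3) * ρbar ^ ((3 : ℝ) / 2)
            - Real.sqrt ρbar * φ ∧
        (2 / 3) * |ρbar + φ| ^ ((3 : ℝ) / 2) - (2 / 3) * ρbar ^ ((3 : ℝ) / 2)
            - Real.sqrt ρbar * φ ≤
          C * |φ| ^ 2 / Real.sqrt (ρbar + |φ|) := by
  refine ⟨1/20, 10, by norm_num, by norm_num, ?_⟩
  intro ρbar φ hρ
  have ha : 0 < Real.sqrt ρbar := Real.sqrt_pos.mpr hρ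
  have ha2 : Real.sqrt ρbar ^ 2 = ρbar := Real.sq_sqrt hρ.le
  set a := Real.sqrt ρbar with ha_def
  rw [rpow32 ρbar hρ.le, rpow32 _ (abs_nonneg _), ← ha_def]
  rcases le_or_gt 0 (ρbar + φ) with h1 | h1
  · have hs2 : Real.sqrt (ρbar + φ) ^ 2 = ρbar + φ := Real.sq_sqrt h1
    set s := Real.sqrt (ρbar + φ) with hs_def
    have hs0 : 0 ≤ s := Real.sqrt_nonneg _
    have habs : |ρbar + φ| = ρbar + φ := abs_of_nonneg h1
    rw [habs, ← hs_def]
    have hφ : φ = s ^ 2 - a ^ 2 := by rw [hs2, ha2]; ring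
    rcases le_or_gt 0 φ with h2 | h2
    · -- φ ≥ 0
      have habsφ : |φ| = φ := abs_of_nonneg h2
      have hden : ρbar + |φ| = ρbar + φ := by rw [habsφ]
      have has : a ≤ s := by nlinarith [sq_nonneg (s - a), sq_nonneg (s + a)]
      have hspos : 0 < s := ha.trans_le has
      rw [hden, ← hs_def, habsφ, hφ]
      obtain ⟨k1, k2⟩ := caseA a s ha has
      constructor
      · rw [div_le_iff₀ hspos]; linarith
      · rw [le_div_iff₀ hspos]; linarith
    · -- −ρ ≤ φ < 0
      have habsφ : |φ| = -φ := abs_of_neg h2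
      have hsa : s ≤ a := Real.sqrt_le_sqrt (by linarith)
      have ht2 : Real.sqrt (ρbar + |φ|) ^ 2 = 2 * a ^ 2 - s ^ 2 := by
        rw [Real.sq_sqrt (by rw [habsφ]; linarith), habsφ, ← ha2, hφ]; ring
      set t := Real.sqrt (ρbar + |φ|) with ht_def
      have ht0 : 0 ≤ t := Real.sqrt_nonneg _
      have hta : a ≤ t := by nlinarith [sq_nonneg (t - a), sq_nonneg (t + a), sq_nonneg s]
      have htpos : 0 < t := ha.trans_le hta
      have ht2a : t ≤ 2 * a := by nlinarith [sq_nonneg s]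
      rw [habsφ, hφ]
      obtain ⟨k1, k2⟩ := caseB a s t ha hs0 hsa hta ht2a
      constructor
      · rw [div_le_iff₀ htpos]; nlinarith
      · rw [le_div_iff₀ htpos]; nlinarith
  · -- ρbar + φ < 0
    have h1' : ρbar + φ ≤ 0 := h1.le
    have hu2 : Real.sqrt (-(ρbar + φ)) ^ 2 = -(ρbar + φ) := Real.sq_sqrt (by linarith)
    set u := Real.sqrt (-(ρbar + φ)) with hu_def
    have hu0 : 0 ≤ u := Real.sqrt_nonneg _
    have hsqabs : Real.sqrt |ρbar + φ| = u := by rw [abs_of_nonpos h1']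
    rw [hsqabs]
    have hφ : φ = -(a ^ 2) - u ^ 2 := by rw [← ha2] at hu2; linarith
    have habsφ : |φ| = a ^ 2 + u ^ 2 := by
      rw [abs_of_nonpos (by nlinarith), hφ]; ring
    have ht2 : Real.sqrt (ρbar + |φ|) ^ 2 = 2 * a ^ 2 + u ^ 2 := by
      rw [Real.sq_sqrt (by rw [habsφ]; nlinarith), habsφ, ← ha2]; ring
    set t := Real.sqrt (ρbar + |φ|) with ht_def
    have ht0 : 0 ≤ t := Real.sqrt_nonneg _
    have hta : a ≤ t := by nlinarith [sq_nonneg (t - a), sq_nonneg (t + a)]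
    have htu : u ≤ t := by nlinarith [sq_nonneg (t - u), sq_nonneg (t + u)]
    have htpos : 0 < t := ha.trans_le hta
    have htub : t ≤ 2 * a + u := by nlinarith [mul_nonneg ha.le hu0]
    rw [habsφ, hφ]
    obtain ⟨k1, k2⟩ := caseC a u t ha hu0 hta htu htub
    constructor
    · rw [div_le_iff₀ htpos]; nlinarith
    · rw [le_div_iff₀ htpos]; nlinarith
end

section
/- For every ρ̄ > 0, a function φ ∈ L¹_loc(ℝ²) satisfies ∫_{ℝ²} Ψ_ρ̄(φ(x)) dx < +∞ if and only if φ ∈ L^{3/2}(ℝ²) + L²(ℝ²). -/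
/-!
Writing `ρ̄ = b²` and `ρ̄ + t = ±a²` turns `Ψ_ρ̄(t)` into a polynomial in `a, b`, and elementary
polynomial inequalities show that `Ψ_ρ̄(t)` is comparable to `t² / √ρ̄` for `|t| ≤ ρ̄` and to
`|t|^{3/2}` for `|t| ≥ ρ̄`. Hence if `Ψ_ρ̄(φ)` is integrable, cutting `φ` at height `|φ| = ρ̄`
splits it into an `L^{3/2}` part and an `L²` part. Conversely `Ψ_ρ̄` is dominated both by
`3|t|^{3/2}` and by `t² / √ρ̄`, and using the first bound when `|v| ≤ |u|` and the second
otherwise gives `Ψ_ρ̄(u + v) ≤ 9|u|^{3/2} + 4v²/√ρ̄`.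
-/

open Real MeasureTheory ENNReal

noncomputable def psi (R t : ℝ) : ℝ :=
  2 / 3 * |R + t| ^ (3 / 2 : ℝ) - 2 / 3 * R ^ (3 / 2 : ℝ) - √R * t

lemma sq_rpow_three_halves {a : ℝ} (ha : 0 ≤ a) : (a ^ 2) ^ (3 / 2 : ℝ) = a ^ 3 := by
  rw [← Real.rpow_natCast, ← Real.rpow_mul ha]; norm_num

lemma rpow_three_halves_le_iff {x y : ℝ} (hx : 0 ≤ x) (hy : 0 ≤ y) :
    x ^ (3 / 2 : ℝ) ≤ y ↔ x ^ 3 ≤ y ^ 2 := by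
  rw [← pow_le_pow_iff_left₀ (by positivity) hy two_ne_zero, ← Real.rpow_natCast,
    ← Real.rpow_mul hx]
  norm_num

lemma le_rpow_three_halves_iff {x y : ℝ} (hx : 0 ≤ x) (hy : 0 ≤ y) :
    y ≤ x ^ (3 / 2 : ℝ) ↔ y ^ 2 ≤ x ^ 3 := by
  rw [← pow_le_pow_iff_left₀ hy (by positivity) two_ne_zero, ← Real.rpow_mul_natCast hx]
  norm_num

lemma psi_sq_sub_sq {a b : ℝ} (ha : 0 ≤ a) (hb : 0 ≤ b) :
    psi (b ^ 2) (a ^ 2 - b ^ 2) = (a - b) ^ 2 * (2 * a + b) / 3 := by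
  rw [psi, add_sub_cancel, abs_of_nonneg (sq_nonneg a), sq_rpow_three_halves ha,
    sq_rpow_three_halves hb, sqrt_sq hb]
  ring

lemma psi_neg_sq_add_sq {b c : ℝ} (hb : 0 ≤ b) (hc : 0 ≤ c) :
    psi (b ^ 2) (-(b ^ 2 + c ^ 2)) = (2 * c ^ 3 + 3 * b * c ^ 2 + b ^ 3) / 3 := by
  rw [psi, show b ^ 2 + -(b ^ 2 + c ^ 2) = -c ^ 2 by ring, abs_neg,
    abs_of_nonneg (sq_nonneg c), sq_rpow_three_halves hc, sq_rpow_three_halves hb, sqrt_sq hb]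
  ring

lemma exists_sq_sub_sq_or_neg_sq_add_sq {R : ℝ} (hR : 0 ≤ R) (t : ℝ) :
    ∃ a b, 0 ≤ a ∧ 0 ≤ b ∧ R = b ^ 2 ∧ (t = a ^ 2 - b ^ 2 ∨ t = -(b ^ 2 + a ^ 2)) := by
  refine ⟨√|R + t|, √R, sqrt_nonneg _, sqrt_nonneg _, (sq_sqrt hR).symm, ?_⟩
  rw [sq_sqrt hR, sq_sqrt (abs_nonneg _)]
  rcases le_total 0 (R + t) with h | h
  · left; rw [abs_of_nonneg h]; ring
  · right; rw [abs_of_nonpos h]; ring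

lemma psi_nonneg {R : ℝ} (hR : 0 ≤ R) (t : ℝ) : 0 ≤ psi R t := by
  obtain ⟨a, b, ha, hb, rfl, rfl | rfl⟩ := exists_sq_sub_sq_or_neg_sq_add_sq hR t
  · rw [psi_sq_sub_sq ha hb]; positivity
  · rw [psi_neg_sq_add_sq hb ha]; positivity

lemma sqrt_mul_psi_le_sq {R : ℝ} (hR : 0 ≤ R) (t : ℝ) : √R * psi R t ≤ t ^ 2 := by
  obtain ⟨a, b, ha, hb, rfl, rfl | rfl⟩ := exists_sq_sub_sq_or_neg_sq_add_sq hR t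
  · rw [psi_sq_sub_sq ha hb, sqrt_sq hb]
    nlinarith [mul_nonneg (sq_nonneg (a - b)) (mul_nonneg ha hb), sq_nonneg (a - b),
      mul_nonneg (sq_nonneg (a - b)) (sq_nonneg a)]
  · rw [psi_neg_sq_add_sq hb ha, sqrt_sq hb]
    nlinarith [mul_nonneg (sq_nonneg (b - a)) (mul_nonneg ha hb),
      mul_nonneg (mul_nonneg ha hb) (sq_nonneg a), mul_nonneg ha hb]

lemma psi_le_rpow {R : ℝ} (hR : 0 ≤ R) (t : ℝ) : psi R t ≤ 3 * |t| ^ (3 / 2 : ℝ) := by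
  rw [← div_le_iff₀' (by norm_num),
    le_rpow_three_halves_iff (abs_nonneg t) (div_nonneg (psi_nonneg hR t) (by norm_num))]
  obtain ⟨a, b, ha, hb, rfl, rfl | rfl⟩ := exists_sq_sub_sq_or_neg_sq_add_sq hR t
  · rw [psi_sq_sub_sq ha hb, show a ^ 2 - b ^ 2 = (a - b) * (a + b) by ring, abs_mul,
      abs_of_nonneg (by positivity : 0 ≤ a + b), ← sq_abs (a - b)]
    have hd : |a - b| ≤ a + b := abs_sub_le_iff.2 ⟨by linarith, by linarith⟩
    have hd0 := abs_nonneg (a - b)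
    have key : |a - b| * (2 * a + b) ^ 2 ≤ 81 * (a + b) ^ 3 := by
      nlinarith [mul_le_mul hd (le_refl ((2 * a + b) ^ 2)) (sq_nonneg _)
        (by positivity : 0 ≤ a + b)]
    have := mul_le_mul_of_nonneg_left key (pow_nonneg hd0 3)
    nlinarith
  · rw [psi_neg_sq_add_sq hb ha, abs_neg, abs_of_nonneg (by positivity)]
    have h1 : 2 * a ^ 3 + 3 * b * a ^ 2 + b ^ 3 ≤ 2 * (a + b) ^ 3 := by
      nlinarith [mul_nonneg ha hb, mul_nonneg (mul_nonneg ha hb) (add_nonneg ha hb)]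
    have h2 : ((a + b) ^ 2) ^ 3 ≤ (2 * (b ^ 2 + a ^ 2)) ^ 3 :=
      pow_le_pow_left₀ (sq_nonneg _) (by nlinarith [sq_nonneg (a - b)]) 3
    calc ((2 * a ^ 3 + 3 * b * a ^ 2 + b ^ 3) / 3 / 3) ^ 2
        ≤ (2 * (a + b) ^ 3 / 3 / 3) ^ 2 := by gcongr
      _ = 4 / 81 * ((a + b) ^ 2) ^ 3 := by ring
      _ ≤ (b ^ 2 + a ^ 2) ^ 3 := by
          nlinarith [pow_nonneg (add_nonneg (sq_nonneg b) (sq_nonneg a)) 3]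

lemma sq_le_sqrt_mul_psi {R t : ℝ} (hR : 0 ≤ R) (ht : |t| ≤ R) : t ^ 2 ≤ 9 * √R * psi R t := by
  obtain ⟨a, b, ha, hb, rfl, rfl | rfl⟩ := exists_sq_sub_sq_or_neg_sq_add_sq hR t
  · rw [psi_sq_sub_sq ha hb, sqrt_sq hb]
    have : a ^ 2 ≤ 2 * b ^ 2 := by linarith [le_abs_self (a ^ 2 - b ^ 2)]
    nlinarith [mul_nonneg (sq_nonneg (a - b)) (mul_nonneg ha hb), sq_nonneg (a - b),
      mul_nonneg (sq_nonneg (a - b)) (sq_nonneg a)]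
  · rw [psi_neg_sq_add_sq hb ha, sqrt_sq hb]
    have : a ^ 2 ≤ 0 := by linarith [neg_abs_le (-(b ^ 2 + a ^ 2))]
    nlinarith [mul_nonneg (mul_nonneg ha hb) (sq_nonneg a), mul_nonneg ha hb]

lemma rpow_le_psi {R t : ℝ} (hR : 0 ≤ R) (ht : R ≤ |t|) : |t| ^ (3 / 2 : ℝ) ≤ 9 * psi R t := by
  rw [rpow_three_halves_le_iff (abs_nonneg t) (mul_nonneg (by norm_num) (psi_nonneg hR t))]
  obtain ⟨a, b, ha, hb, rfl, rfl | rfl⟩ := exists_sq_sub_sq_or_neg_sq_add_sq hR t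
  · rw [psi_sq_sub_sq ha hb]
    rcases le_total a b with hab | hab
    · have ha0 : a = 0 := by
        rw [abs_of_nonpos (by nlinarith)] at ht
        nlinarith
      subst ha0
      rw [abs_of_nonpos (by nlinarith)]
      nlinarith [pow_nonneg hb 6]
    · rw [abs_of_nonneg (by nlinarith)] at ht ⊢
      have hba : b ≤ 3 / 4 * a := by nlinarith
      have key : (a + b) ^ 3 ≤ 9 * (a - b) * (2 * a + b) ^ 2 := by
        nlinarith [mul_nonneg ha hb, mul_nonneg (mul_nonneg ha hb) hb, pow_nonneg ha 3]
      have := mul_le_mul_of_nonneg_left key (pow_nonneg (sub_nonneg.2 hab) 3)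
      nlinarith
  · rw [psi_neg_sq_add_sq hb ha, abs_neg, abs_of_nonneg (by positivity)]
    have h1 : (b ^ 2 + a ^ 2) ^ 3 ≤ 4 * (b ^ 6 + a ^ 6) := by
      nlinarith [mul_nonneg (sq_nonneg (b ^ 2 - a ^ 2)) (add_nonneg (sq_nonneg a) (sq_nonneg b))]
    have h2 : (2 * a ^ 3 + b ^ 3) ^ 2 ≤ (2 * a ^ 3 + 3 * b * a ^ 2 + b ^ 3) ^ 2 :=
      pow_le_pow_left₀ (by positivity) (by nlinarith [mul_nonneg hb (sq_nonneg a)]) 2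
    nlinarith [mul_nonneg (pow_nonneg ha 3) (pow_nonneg hb 3)]

lemma psi_add_le {R : ℝ} (hR : 0 < R) (u v : ℝ) :
    psi R (u + v) ≤ 9 * |u| ^ (3 / 2 : ℝ) + 4 / √R * v ^ 2 := by
  have hsqrt : 0 < √R := sqrt_pos.2 hR
  rcases le_total |v| |u| with huv | huv
  · have htwo : (2 : ℝ) ^ (3 / 2 : ℝ) ≤ 3 := by
      rw [rpow_three_halves_le_iff] <;> norm_num
    calc psi R (u + v) ≤ 3 * |u + v| ^ (3 / 2 : ℝ) := psi_le_rpow hR.le _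
      _ ≤ 3 * (2 * |u|) ^ (3 / 2 : ℝ) := by
          gcongr; linarith [abs_add_le u v]
      _ = 3 * 2 ^ (3 / 2 : ℝ) * |u| ^ (3 / 2 : ℝ) := by
          rw [mul_rpow zero_le_two (abs_nonneg u)]; ring
      _ ≤ 9 * |u| ^ (3 / 2 : ℝ) + 4 / √R * v ^ 2 := by
          nlinarith [rpow_nonneg (abs_nonneg u) (3 / 2 : ℝ), div_nonneg zero_le_four hsqrt.le,
            sq_nonneg v]
  · have hsq : (u + v) ^ 2 ≤ 4 * v ^ 2 := by
      rw [← sq_abs, ← sq_abs v]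
      nlinarith [abs_add_le u v, abs_nonneg (u + v), abs_nonneg u]
    calc psi R (u + v) ≤ (u + v) ^ 2 / √R := by
          rw [le_div_iff₀' hsqrt]; exact sqrt_mul_psi_le_sq hR.le _
      _ ≤ 4 * v ^ 2 / √R := by gcongr
      _ = 4 / √R * v ^ 2 := by ring
      _ ≤ 9 * |u| ^ (3 / 2 : ℝ) + 4 / √R * v ^ 2 := by
          have := rpow_nonneg (abs_nonneg u) (3 / 2 : ℝ); linarith

lemma rpow_ite_le_psi {R : ℝ} (hR : 0 ≤ R) (t : ℝ) :
    |if R < |t| then t else 0| ^ (3 / 2 : ℝ) ≤ 9 * psi R t := by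
  split_ifs with ht
  · exact rpow_le_psi hR ht.le
  · rw [abs_zero, zero_rpow (by norm_num)]
    exact mul_nonneg (by norm_num) (psi_nonneg hR t)

lemma sq_ite_le_psi {R : ℝ} (hR : 0 ≤ R) (t : ℝ) :
    (if R < |t| then 0 else t) ^ 2 ≤ 9 * √R * psi R t := by
  split_ifs with ht
  · rw [zero_pow two_ne_zero]
    exact mul_nonneg (by positivity) (psi_nonneg hR t)
  · exact sq_le_sqrt_mul_psi hR (not_lt.1 ht)

lemma continuous_psi (R : ℝ) : Continuous (psi R) := by
  unfold psi
  fun_prop (disch := norm_num)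

section
variable {α : Type*} [MeasurableSpace α] {μ : Measure α}

lemma memLp_iff_integrable_norm_rpow {E : Type*} [NormedAddCommGroup E] {p : ℝ≥0∞} (hp0 : p ≠ 0)
    (hp : p ≠ ∞) {f : α → E} (hf : AEStronglyMeasurable f μ) :
    MemLp f p μ ↔ Integrable (fun x => ‖f x‖ ^ p.toReal) μ := by
  rw [← memLp_norm_rpow_iff hf hp0 hp, ENNReal.div_self hp0 hp, memLp_one_iff_integrable]

lemma toReal_three_halves : ((3 : ℝ≥0∞) / 2).toReal = 3 / 2 := by
  rw [ENNReal.toReal_div]; norm_num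

lemma exists_memLp_add_memLp_of_integrable_psi {R : ℝ} (hR : 0 ≤ R) {φ : α → ℝ}
    (hφ : AEStronglyMeasurable φ μ) (h : Integrable (fun x => psi R (φ x)) μ) :
    ∃ f g : α → ℝ, MemLp f (3 / 2) μ ∧ MemLp g 2 μ ∧ φ = f + g := by
  have hR_lt : MeasurableSet {t : ℝ | R < |t|} := measurableSet_lt measurable_const measurable_abs
  have hf : AEStronglyMeasurable (fun x => if R < |φ x| then φ x else 0) μ :=
    ((measurable_id.ite hR_lt measurable_const).comp_aemeasurable
      hφ.aemeasurable).aestronglyMeasurable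
  have hg : AEStronglyMeasurable (fun x => if R < |φ x| then 0 else φ x) μ :=
    ((measurable_const.ite hR_lt measurable_id).comp_aemeasurable
      hφ.aemeasurable).aestronglyMeasurable
  refine ⟨fun x => if R < |φ x| then φ x else 0, fun x => if R < |φ x| then 0 else φ x,
    ?_, ?_, ?_⟩
  · rw [memLp_iff_integrable_norm_rpow (by norm_num) (by finiteness) hf, toReal_three_halves]
    refine (h.const_mul 9).mono' (hf.norm.aemeasurable.pow_const _).aestronglyMeasurable
      (ae_of_all _ fun x => ?_)
    rw [norm_of_nonneg (by positivity)]
    exact rpow_ite_le_psi hR (φ x)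
  · rw [memLp_two_iff_integrable_sq hg]
    refine (h.const_mul (9 * √R)).mono' (hg.pow 2) (ae_of_all _ fun x => ?_)
    rw [norm_of_nonneg (sq_nonneg _)]
    exact sq_ite_le_psi hR (φ x)
  · ext x
    simp only [Pi.add_apply]
    split_ifs <;> simp

lemma integrable_psi_add {R : ℝ} (hR : 0 < R) {f g : α → ℝ} (hf : MemLp f (3 / 2) μ)
    (hg : MemLp g 2 μ) : Integrable (fun x => psi R (f x + g x)) μ := by
  have hf' := hf.integrable_norm_rpow (by norm_num) (by finiteness)
  rw [toReal_three_halves] at hf'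
  refine ((hf'.const_mul 9).add (hg.integrable_sq.const_mul (4 / √R))).mono'
    ((continuous_psi R).comp_aestronglyMeasurable (hf.1.add hg.1)) (ae_of_all _ fun x => ?_)
  rw [norm_of_nonneg (psi_nonneg hR.le _)]
  exact psi_add_le hR (f x) (g x)

theorem integrable_psi_comp_iff {R : ℝ} (hR : 0 < R) {φ : α → ℝ}
    (hφ : AEStronglyMeasurable φ μ) :
    Integrable (fun x => psi R (φ x)) μ ↔
      ∃ f g : α → ℝ, MemLp f (3 / 2) μ ∧ MemLp g 2 μ ∧ φ = f + g := by
  refine ⟨exists_memLp_add_memLp_of_integrable_psi hR.le hφ, ?_⟩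
  rintro ⟨f, g, hf, hg, rfl⟩
  exact integrable_psi_add hR hf hg

end

/-- integrability of `Ψ_ρ̄(φ)` characterizes `L^{3/2} + L²`. -/
theorem psi_integrable_iff_sum_Lp (ρbar : ℝ) (hρ : 0 < ρbar)
    (φ : EuclideanSpace ℝ (Fin 2) → ℝ)
    (hφ : MeasureTheory.LocallyIntegrable φ (volume : Measure (EuclideanSpace ℝ (Fin 2)))) :
    MeasureTheory.Integrable
        (fun x => (2 / 3) * |ρbar + φ x| ^ ((3 : ℝ) / 2)
          - (2 / 3) * ρbar ^ ((3 : ℝ) / 2) - Real.sqrt ρbar * φ x)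
        (volume : Measure (EuclideanSpace ℝ (Fin 2))) ↔
      ∃ f g : EuclideanSpace ℝ (Fin 2) → ℝ,
        MeasureTheory.MemLp f ((3 : ℝ≥0∞) / 2) volume ∧
        MeasureTheory.MemLp g 2 volume ∧ φ = f + g :=
  integrable_psi_comp_iff hρ hφ.aestronglyMeasurable
end

section
/- Let 0 ≤ f ∈ L¹(ℝ²) be dominated pointwise by a radially symmetric non-increasing function φ : ℝ₊ → ℝ₊ satisfying lim_{|x|→∞} φ(|x|)|x|² = 0. Then ∫_{ℝ²} f(y)/|x-y| dy = ‖f‖_{L¹(ℝ²)}/|x| + o(1/|x|) as |x| → ∞. -/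
/-!
In dimension `d ≥ 2`, split the integral at the ball `B = ball x (‖x‖ / 2)`. Outside `B` the
kernel `‖x‖ / ‖x - y‖` is at most `2` and tends to `1` pointwise, so by dominated convergence
that part tends to `∫ f`. Inside `B` every `y` has `‖y‖ ≥ ‖x‖ / 2`, so `f ≤ φ (‖x‖ / 2)` there,
while the kernel `‖x - y‖⁻¹` integrates over `B` to a multiple of `‖x‖ ^ (d - 1)` (polar
coordinates); hence `‖x‖` times that part is `O((‖x‖ / 2) ^ d φ (‖x‖ / 2)) → 0`.
-/

open MeasureTheory Filter Metric Set Module Topology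

section NormedGroup

variable {E : Type*} [NormedAddCommGroup E]

theorem preimage_sub_left_ball_zero (x : E) (R : ℝ) : (x - ·) ⁻¹' ball 0 R = ball x R := by
  ext y
  simp [dist_eq_norm, norm_sub_rev]

theorem inv_norm_sub_le_of_notMem_ball_half {x y : E} (hx : x ≠ 0) (hy : y ∉ ball x (‖x‖ / 2)) :
    ‖x - y‖⁻¹ ≤ 2 / ‖x‖ := by
  rw [mem_ball, dist_comm, dist_eq_norm, not_lt] at hy
  simpa using inv_anti₀ (by positivity) hy

theorem tendsto_norm_div_norm_sub (y : E) :
    Tendsto (fun x : E => ‖x‖ / ‖x - y‖) (comap norm atTop) (𝓝 1) := by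
  have hsub : Tendsto (fun x : E => ‖x - y‖) (comap norm atTop) atTop :=
    tendsto_atTop_mono (fun x => by linarith [norm_sub_norm_le x y])
      (tendsto_atTop_add_const_right _ (-‖y‖) tendsto_comap)
  rw [tendsto_iff_norm_sub_tendsto_zero]
  refine squeeze_zero' (.of_forall fun _ => norm_nonneg _) ?_
    (tendsto_const_nhds (x := ‖y‖).div_atTop hsub)
  filter_upwards [hsub.eventually_gt_atTop 0] with x hx
  rw [div_sub_one hx.ne', norm_div, Real.norm_of_nonneg hx.le, Real.norm_eq_abs]
  gcongr
  simpa [abs_sub_comm] using abs_norm_sub_norm_le x (x - y)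

theorem le_apply_half_norm_of_mem_ball {f : E → ℝ} {φ : ℝ → ℝ} (hφ : AntitoneOn φ (Ici 0))
    (hdom : ∀ y, f y ≤ φ ‖y‖) {x y : E} (hy : y ∈ ball x (‖x‖ / 2)) : f y ≤ φ (‖x‖ / 2) := by
  rw [mem_ball, dist_comm, dist_eq_norm] at hy
  have hxy : ‖x‖ / 2 ≤ ‖y‖ := by linarith [norm_sub_norm_le x y]
  have h0 : (0 : ℝ) ≤ ‖x‖ / 2 := by positivity
  exact (hdom y).trans (hφ h0 (h0.trans hxy) hxy)

variable [MeasurableSpace E] [BorelSpace E] {μ : Measure E}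

theorem MeasureTheory.AEStronglyMeasurable.div_norm_sub {f : E → ℝ}
    (hf : AEStronglyMeasurable f μ) (x : E) : AEStronglyMeasurable (fun y => f y / ‖x - y‖) μ :=
  (hf.aemeasurable.div (by fun_prop)).aestronglyMeasurable

theorem integrableOn_compl_ball_half_div_norm_sub {f : E → ℝ} (hf : Integrable f μ) {x : E}
    (hx : x ≠ 0) : IntegrableOn (fun y => f y / ‖x - y‖) (ball x (‖x‖ / 2))ᶜ μ := by
  refine (hf.norm.const_mul (2 / ‖x‖)).integrableOn.mono'
    (hf.aestronglyMeasurable.div_norm_sub x).restrict ?_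
  filter_upwards [ae_restrict_mem measurableSet_ball.compl] with y hy
  rw [norm_div, norm_norm, div_eq_mul_inv, mul_comm]
  exact mul_le_mul_of_nonneg_right (inv_norm_sub_le_of_notMem_ball_half hx hy) (norm_nonneg _)

theorem tendsto_norm_mul_setIntegral_compl_ball_half {f : E → ℝ} (hf : Integrable f μ) :
    Tendsto (fun x => ‖x‖ * ∫ y in (ball x (‖x‖ / 2))ᶜ, f y / ‖x - y‖ ∂μ)
      (comap norm atTop) (𝓝 (∫ y, f y ∂μ)) := by
  have hnorm : Tendsto (fun x : E => ‖x‖) (comap norm atTop) atTop := tendsto_comap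
  simp_rw [← integral_const_mul, ← integral_indicator measurableSet_ball.compl]
  refine tendsto_integral_filter_of_dominated_convergence (fun y => 2 * ‖f y‖)
    (.of_forall fun x => ?_) ?_ (hf.norm.const_mul 2) (ae_of_all _ fun y => ?_)
  · exact ((hf.aestronglyMeasurable.div_norm_sub x).const_mul _).indicator
      measurableSet_ball.compl
  · filter_upwards [hnorm.eventually_gt_atTop 0] with x hx
    refine ae_of_all _ fun y => ?_
    by_cases hy : y ∈ (ball x (‖x‖ / 2))ᶜ
    · rw [indicator_of_mem hy, norm_mul, norm_div, norm_norm, norm_norm, div_eq_mul_inv]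
      calc ‖x‖ * (‖f y‖ * ‖x - y‖⁻¹) ≤ ‖x‖ * (‖f y‖ * (2 / ‖x‖)) := by
            gcongr
            exact inv_norm_sub_le_of_notMem_ball_half (norm_pos_iff.1 hx) hy
        _ = 2 * ‖f y‖ := by field_simp
    · rw [indicator_of_notMem hy, norm_zero]
      positivity
  · have hmem : ∀ᶠ x in comap norm atTop, y ∈ (ball x (‖x‖ / 2))ᶜ := by
      filter_upwards [hnorm.eventually_gt_atTop (2 * ‖y‖)] with x hx
      rw [mem_compl_iff, mem_ball, dist_comm, dist_eq_norm, not_lt]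
      linarith [norm_sub_norm_le x y]
    have hlim := (tendsto_norm_div_norm_sub y).const_mul (f y)
    rw [mul_one] at hlim
    refine hlim.congr' ?_
    filter_upwards [hmem] with x hx
    rw [indicator_of_mem hx]
    ring

end NormedGroup

section AddHaar

variable {E : Type*} [NormedAddCommGroup E] [MeasurableSpace E] [BorelSpace E]
  [NormedSpace ℝ E] [FiniteDimensional ℝ E] (μ : Measure E) [μ.IsAddHaarMeasure]

theorem integrableOn_ball_inv_norm (hd : 1 < finrank ℝ E) (R : ℝ) :
    IntegrableOn (fun y : E => ‖y‖⁻¹) (ball 0 R) μ :=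
  integrableOn_ball_of_norm_le_rpow hd.le (C := 1) (α := 1) (by exact_mod_cast hd)
    (ae_of_all _ fun y => by simp [Real.rpow_neg_one]) (by fun_prop)

theorem setIntegral_ball_inv_norm (hd : 2 ≤ finrank ℝ E) {R : ℝ} (hR : 0 ≤ R) :
    ∫ y in ball 0 R, ‖y‖⁻¹ ∂μ =
      finrank ℝ E / (finrank ℝ E - 1) * μ.real (ball 0 1) * R ^ (finrank ℝ E - 1) := by
  have : Nontrivial E := nontrivial_of_finrank_pos (R := ℝ) (by omega)
  obtain ⟨k, hk⟩ : ∃ k, finrank ℝ E = k + 2 := ⟨finrank ℝ E - 2, by omega⟩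
  have hball : ∫ y in ball 0 R, ‖y‖⁻¹ ∂μ = ∫ y, (Iio R).indicator (·⁻¹) ‖y‖ ∂μ := by
    rw [← integral_indicator measurableSet_ball]
    congr 1 with y
    simp [indicator]
  have hradial : ∫ t in Ioi (0 : ℝ), t ^ (finrank ℝ E - 1) • (Iio R).indicator (·⁻¹) t =
      ∫ t in (0)..R, t ^ k := by
    rw [intervalIntegral.integral_of_le hR, integral_Ioc_eq_integral_Ioo, ← Ioi_inter_Iio,
      ← setIntegral_indicator measurableSet_Iio]
    refine setIntegral_congr_fun measurableSet_Ioi fun t (ht : 0 < t) => ?_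
    by_cases htR : t < R
    · simp [htR, hk, pow_succ, ht.ne']
    · simp [htR]
  rw [hball, integral_fun_norm_addHaar, hradial, integral_pow, hk]
  push_cast
  field_simp
  ring

theorem integrableOn_ball_inv_norm_sub (hd : 1 < finrank ℝ E) (x : E) (R : ℝ) :
    IntegrableOn (fun y => ‖x - y‖⁻¹) (ball x R) μ := by
  rw [← preimage_sub_left_ball_zero]
  exact ((Measure.measurePreserving_sub_left μ x).integrableOn_comp_preimage
    (measurableEmbedding_subLeft x)).2 (integrableOn_ball_inv_norm μ hd R)

theorem setIntegral_ball_inv_norm_sub (hd : 2 ≤ finrank ℝ E) (x : E) {R : ℝ} (hR : 0 ≤ R) :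
    ∫ y in ball x R, ‖x - y‖⁻¹ ∂μ =
      finrank ℝ E / (finrank ℝ E - 1) * μ.real (ball 0 1) * R ^ (finrank ℝ E - 1) := by
  rw [← preimage_sub_left_ball_zero, ← setIntegral_ball_inv_norm μ hd hR]
  exact (Measure.measurePreserving_sub_left μ x).setIntegral_preimage_emb
    (measurableEmbedding_subLeft x) (fun z => ‖z‖⁻¹) (ball 0 R)

variable {μ}

theorem integrableOn_ball_div_norm_sub (hd : 1 < finrank ℝ E) {f : E → ℝ}
    (hf : AEStronglyMeasurable f μ) (hf0 : ∀ y, 0 ≤ f y) {x : E} {R M : ℝ}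
    (hM : ∀ y ∈ ball x R, f y ≤ M) :
    IntegrableOn (fun y => f y / ‖x - y‖) (ball x R) μ := by
  refine ((integrableOn_ball_inv_norm_sub μ hd x R).const_mul M).mono'
    (hf.div_norm_sub x).restrict ?_
  filter_upwards [ae_restrict_mem measurableSet_ball] with y hy
  rw [norm_div, norm_norm, Real.norm_of_nonneg (hf0 y), div_eq_mul_inv]
  gcongr
  exact hM y hy

theorem setIntegral_ball_div_norm_sub_le (hd : 1 < finrank ℝ E) {f : E → ℝ}
    (hf : AEStronglyMeasurable f μ) (hf0 : ∀ y, 0 ≤ f y) {x : E} {R M : ℝ}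
    (hM : ∀ y ∈ ball x R, f y ≤ M) :
    ∫ y in ball x R, f y / ‖x - y‖ ∂μ ≤ M * ∫ y in ball x R, ‖x - y‖⁻¹ ∂μ := by
  rw [← integral_const_mul]
  refine setIntegral_mono_on (integrableOn_ball_div_norm_sub hd hf hf0 hM)
    ((integrableOn_ball_inv_norm_sub μ hd x R).const_mul M) measurableSet_ball fun y hy => ?_
  rw [div_eq_mul_inv]
  gcongr
  exact hM y hy

theorem tendsto_norm_mul_setIntegral_ball_half (hd : 2 ≤ finrank ℝ E) {f : E → ℝ}
    (hf : AEStronglyMeasurable f μ) (hf0 : ∀ y, 0 ≤ f y) {φ : ℝ → ℝ}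
    (hφ : AntitoneOn φ (Ici 0)) (hdom : ∀ y, f y ≤ φ ‖y‖)
    (hdecay : Tendsto (fun t => t ^ finrank ℝ E * φ t) atTop (𝓝 0)) :
    Tendsto (fun x => ‖x‖ * ∫ y in ball x (‖x‖ / 2), f y / ‖x - y‖ ∂μ)
      (comap norm atTop) (𝓝 0) := by
  set C := finrank ℝ E / (finrank ℝ E - 1) * μ.real (ball 0 1) with hC
  have hhalf : Tendsto (fun x : E => ‖x‖ / 2) (comap norm atTop) atTop :=
    tendsto_comap.atTop_div_const two_pos
  have hupper := (hdecay.comp hhalf).const_mul (2 * C)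
  rw [mul_zero] at hupper
  refine squeeze_zero (fun x => ?_) (fun x => ?_) hupper
  · exact mul_nonneg (norm_nonneg x) (setIntegral_nonneg measurableSet_ball fun y _ =>
      div_nonneg (hf0 y) (norm_nonneg _))
  · have hpow : (‖x‖ / 2) ^ finrank ℝ E = (‖x‖ / 2) ^ (finrank ℝ E - 1) * (‖x‖ / 2) := by
      rw [← pow_succ, Nat.sub_add_cancel (by omega)]
    calc ‖x‖ * ∫ y in ball x (‖x‖ / 2), f y / ‖x - y‖ ∂μ
        ≤ ‖x‖ * (φ (‖x‖ / 2) * ∫ y in ball x (‖x‖ / 2), ‖x - y‖⁻¹ ∂μ) := by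
          gcongr
          exact setIntegral_ball_div_norm_sub_le (by omega) hf hf0 fun y hy =>
            le_apply_half_norm_of_mem_ball hφ hdom hy
      _ = 2 * C * ((‖x‖ / 2) ^ finrank ℝ E * φ (‖x‖ / 2)) := by
          rw [setIntegral_ball_inv_norm_sub μ hd x (by positivity), ← hC, hpow]
          ring

theorem tendsto_norm_mul_integral_div_norm_sub (hd : 2 ≤ finrank ℝ E) {f : E → ℝ}
    (hf : Integrable f μ) (hf0 : ∀ y, 0 ≤ f y) {φ : ℝ → ℝ}
    (hφ : AntitoneOn φ (Ici 0)) (hdom : ∀ y, f y ≤ φ ‖y‖)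
    (hdecay : Tendsto (fun t => t ^ finrank ℝ E * φ t) atTop (𝓝 0)) :
    Tendsto (fun x => ‖x‖ * ∫ y, f y / ‖x - y‖ ∂μ) (comap norm atTop) (𝓝 (∫ y, f y ∂μ)) := by
  have hsplit : ∀ x : E, x ≠ 0 → ‖x‖ * ∫ y, f y / ‖x - y‖ ∂μ =
      ‖x‖ * ∫ y in ball x (‖x‖ / 2), f y / ‖x - y‖ ∂μ +
        ‖x‖ * ∫ y in (ball x (‖x‖ / 2))ᶜ, f y / ‖x - y‖ ∂μ := fun x hx => by
    have hint : Integrable (fun y => f y / ‖x - y‖) μ := by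
      rw [← integrableOn_univ, ← union_compl_self (ball x (‖x‖ / 2))]
      exact (integrableOn_ball_div_norm_sub (by omega) hf.aestronglyMeasurable hf0
        fun y hy => le_apply_half_norm_of_mem_ball hφ hdom hy).union
        (integrableOn_compl_ball_half_div_norm_sub hf hx)
    rw [← mul_add, integral_add_compl measurableSet_ball hint]
  have hlim := (tendsto_norm_mul_setIntegral_ball_half hd hf.aestronglyMeasurable hf0 hφ hdom
    hdecay).add (tendsto_norm_mul_setIntegral_compl_ball_half hf)
  rw [zero_add] at hlim
  refine hlim.congr' ?_
  filter_upwards [tendsto_comap.eventually_gt_atTop 0] with x hx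
  exact (hsplit x (norm_pos_iff.1 hx)).symm

end AddHaar

theorem asymptotic_newton_general
    (f : EuclideanSpace ℝ (Fin 2) → ℝ)
    (hf_int : MeasureTheory.Integrable f volume)
    (hf_nonneg : ∀ x, 0 ≤ f x)
    (φ : ℝ → ℝ)
    (hφ_anti : AntitoneOn φ (Set.Ici 0))
    (hdom : ∀ x, f x ≤ φ ‖x‖)
    (hφ_decay : Tendsto (fun t : ℝ => t ^ 2 * φ t) atTop (nhds 0)) :
    Tendsto (fun x : EuclideanSpace ℝ (Fin 2) =>
        ‖x‖ * ∫ y, f y / ‖x - y‖)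
      (Filter.comap norm Filter.atTop) (nhds (∫ y, f y)) :=
  tendsto_norm_mul_integral_div_norm_sub (by simp) hf_int hf_nonneg hφ_anti hdom
    (by simpa using hφ_decay)

/-- asymptotic Newton's theorem for the 2D Riesz potential. -/
theorem asymptotic_newton
    (f : EuclideanSpace ℝ (Fin 2) → ℝ)
    (hf_int : MeasureTheory.Integrable f volume)
    (hf_nonneg : ∀ x, 0 ≤ f x)
    (φ : ℝ → ℝ)
    (hφ_nonneg : ∀ t, 0 ≤ t → 0 ≤ φ t)
    (hφ_anti : AntitoneOn φ (Set.Ici 0))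
    (hdom : ∀ x, f x ≤ φ ‖x‖)
    (hφ_decay : Tendsto (fun t : ℝ => t ^ 2 * φ t) atTop (nhds 0)) :
    Tendsto (fun x : EuclideanSpace ℝ (Fin 2) =>
        ‖x‖ * ∫ y, f y / ‖x - y‖)
      (Filter.comap norm Filter.atTop) (nhds (∫ y, f y)) :=
  asymptotic_newton_general f hf_int hf_nonneg φ hφ_anti hdom hφ_decay
end

section
/- Let U(r) = 1/(r log(er)) for r > 1. Then for the function Φ_U(r,τ) := U(r) - U(rτ) + (U(r) - U(r/τ))/τ one has Φ_U(r,τ) ≤ 0 for all r > 2 and all τ ∈ [1,r]. -/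
open Real

/-- `Φ_U(r,τ) ≤ 0` for `r > 2` and `τ ∈ [1,r]`, where
`U(r) = 1/(r log(er))`. -/
theorem log_barrier_Phi_nonpos (r τ : ℝ) (hr : 2 < r) (hτ1 : 1 ≤ τ) (hτr : τ ≤ r) :
    (1 / (r * Real.log (Real.exp 1 * r)))
      - 1 / (r * τ * Real.log (Real.exp 1 * (r * τ)))
      + (1 / (r * Real.log (Real.exp 1 * r))
          - 1 / ((r / τ) * Real.log (Real.exp 1 * (r / τ)))) / τ ≤ 0 := by
  have hτ0 : (0:ℝ) < τ := by linarith
  have hr0 : (0:ℝ) < r := by linarith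
  have ht0 : 0 ≤ Real.log τ := Real.log_nonneg hτ1
  have htA : Real.log τ ≤ Real.log r := Real.log_le_log hτ0 hτr
  have hA : 0 < Real.log r := Real.log_pos (by linarith)
  have e1 : Real.log (Real.exp 1 * r) = 1 + Real.log r := by
    rw [Real.log_mul (Real.exp_ne_zero 1) hr0.ne', Real.log_exp]
  have e2 : Real.log (Real.exp 1 * (r * τ)) = 1 + Real.log r + Real.log τ := by
    rw [Real.log_mul (Real.exp_ne_zero 1) (by positivity), Real.log_mul hr0.ne' hτ0.ne',
      Real.log_exp]; ring
  have e3 : Real.log (Real.exp 1 * (r / τ)) = 1 + Real.log r - Real.log τ := by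
    rw [Real.log_mul (Real.exp_ne_zero 1) (by positivity), Real.log_div hr0.ne' hτ0.ne',
      Real.log_exp]; ring
  rw [e1, e2, e3]
  set A := Real.log r with hAdef
  set t := Real.log τ with htdef
  have h1 : (0:ℝ) < 1 + A := by linarith
  have h2 : (0:ℝ) < 1 + A + t := by linarith
  have h3 : (0:ℝ) < 1 + A - t := by linarith
  have key : (1 / (r * (1 + A)))
      - 1 / (r * τ * (1 + A + t))
      + (1 / (r * (1 + A)) - 1 / ((r / τ) * (1 + A - t))) / τ
      = (t / (r * (1 + A))) * (1 / (τ * (1 + A + t)) - 1 / (1 + A - t)) := by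
    field_simp
    ring
  rw [key]
  have hfac1 : 0 ≤ t / (r * (1 + A)) := by positivity
  have hfac2 : 1 / (τ * (1 + A + t)) - 1 / (1 + A - t) ≤ 0 := by
    have hle : 1 + A - t ≤ τ * (1 + A + t) := by nlinarith
    have := one_div_le_one_div_of_le h3 hle
    linarith
  exact mul_nonpos_of_nonneg_of_nonpos hfac1 hfac2
end

section
/- Let U(r) = 1/(r log(er)). Then for all r > 2 and all τ ∈ [1,2], Φ_U(r,τ) ≥ -4 r² L U(r) (τ-1)², where Φ_U(r,τ) = U(r) - U(rτ) + (U(r)-U(r/τ))/τ and L U(r) = U''(r) + (2/r)U'(r) = log(e³r)/(r log(er))³. -/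
open Real

theorem keypoly (A t τ : ℝ) (hA : 1.69 ≤ A) (ht0 : 0 ≤ t) (hts : t ≤ τ - 1) (ht7 : t ≤ 0.7)
    (hτ1 : 1 ≤ τ) (hτ2 : τ ≤ 2) :
    A^2 * t * (A*(τ-1) + t*(τ+1)) ≤ 4*(A+2)*(τ-1)^2*τ*(A+t)*(A-t) := by
  have hs : 0 ≤ τ - 1 := by linarith
  have hst : 0 ≤ τ - 1 - t := by linarith
  have hA0 : (0:ℝ) ≤ A := by linarith
  have h3 : 0 ≤ A * (τ-1) * ((τ-1) - t) := by positivity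
  have h4 : t^2*(τ+1) ≤ 3*(τ-1)^2 := by nlinarith [mul_nonneg hst (by linarith : 0 ≤ τ - 1 + t)]
  have step1 : A^2 * t * (A*(τ-1) + t*(τ+1)) ≤ A^2 * (τ-1)^2 * (A+3) := by
    nlinarith [mul_le_mul_of_nonneg_left h4 (sq_nonneg A),
      mul_nonneg (sq_nonneg A) h3]
  have h1 : A * (A+3) ≤ 4*(A+2)*(A-0.7) := by nlinarith
  have h2 : A * (A - 0.7) ≤ τ*(A+t)*(A-t) := by
    have ht2 : t^2 ≤ 0.49 := by nlinarith
    have hAt : 0 ≤ (A+t)*(A-t) := by nlinarith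
    nlinarith [mul_nonneg (by linarith : (0:ℝ) ≤ τ - 1) hAt]
  have step2 : A^2 * (τ-1)^2 * (A+3) ≤ 4*(A+2)*(τ-1)^2*τ*(A+t)*(A-t) := by
    have := mul_le_mul_of_nonneg_left h2 (by positivity : (0:ℝ) ≤ 4*(A+2)*(τ-1)^2)
    nlinarith [mul_le_mul_of_nonneg_left h1 (mul_nonneg hA0 (sq_nonneg (τ-1)))]
  linarith

/-- lower bound `Φ_U(r,τ) ≥ -4r² L U(r) (τ-1)²` for `r > 2`,
`τ ∈ [1,2]`, with `L U(r) = log(e³r)/(r log(er))³`. -/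
theorem log_barrier_Phi_lower (r τ : ℝ) (hr : 2 < r) (hτ1 : 1 ≤ τ) (hτ2 : τ ≤ 2) :
    -4 * r ^ 2 * (Real.log (Real.exp 3 * r) / (r * Real.log (Real.exp 1 * r)) ^ 3)
        * (τ - 1) ^ 2 ≤
      (1 / (r * Real.log (Real.exp 1 * r)))
        - 1 / (r * τ * Real.log (Real.exp 1 * (r * τ)))
        + (1 / (r * Real.log (Real.exp 1 * r))
            - 1 / ((r / τ) * Real.log (Real.exp 1 * (r / τ)))) / τ := by
  have hr0 : (0:ℝ) < r := by linarith
  have hτ0 : (0:ℝ) < τ := by linarith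
  have hrne : r ≠ 0 := ne_of_gt hr0
  have hτne : τ ≠ 0 := ne_of_gt hτ0
  have he1 : Real.log (Real.exp 1 * r) = 1 + Real.log r := by
    rw [Real.log_mul (Real.exp_ne_zero 1) hrne, Real.log_exp]
  have he3 : Real.log (Real.exp 3 * r) = 3 + Real.log r := by
    rw [Real.log_mul (Real.exp_ne_zero 3) hrne, Real.log_exp]
  have he2 : Real.log (Real.exp 1 * (r * τ)) = 1 + Real.log r + Real.log τ := by
    rw [Real.log_mul (Real.exp_ne_zero 1) (by positivity), Real.log_exp,
      Real.log_mul hrne hτne]; ring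
  have he4 : Real.log (Real.exp 1 * (r / τ)) = 1 + Real.log r - Real.log τ := by
    rw [Real.log_mul (Real.exp_ne_zero 1) (by positivity), Real.log_exp,
      Real.log_div hrne hτne]; ring
  rw [he1, he2, he3, he4]
  set A : ℝ := 1 + Real.log r with hAdef
  set t : ℝ := Real.log τ with htdef
  have hlog2 : (0.6931471803 : ℝ) < Real.log 2 := Real.log_two_gt_d9
  have hlog2' : Real.log 2 < 0.6931471808 := Real.log_two_lt_d9
  have hlr : Real.log 2 < Real.log r := Real.log_lt_log (by norm_num) hr
  have hA : (1.69:ℝ) ≤ A := by rw [hAdef]; linarith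
  have ht0 : 0 ≤ t := Real.log_nonneg hτ1
  have hts : t ≤ τ - 1 := by
    have := Real.log_le_sub_one_of_pos hτ0
    linarith
  have ht7 : t ≤ 0.7 := by
    have : t ≤ Real.log 2 := Real.log_le_log (by linarith) hτ2
    linarith
  have hApos : (0:ℝ) < A := by linarith
  have hAt1 : (0:ℝ) < A + t := by linarith
  have hAt2 : (0:ℝ) < A - t := by linarith
  have key := keypoly A t τ hA ht0 hts ht7 hτ1 hτ2
  rw [← sub_nonneg]
  have hid : (1 / (r * A) - 1 / (r * τ * (A + t))
        + (1 / (r * A) - 1 / (r / τ * (A - t))) / τ)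
      - (-4 * r ^ 2 * ((A + 2) / (r * A) ^ 3) * (τ - 1) ^ 2)
      = (4*(A+2)*(τ-1)^2*τ*(A+t)*(A-t) - A^2 * t * (A*(τ-1) + t*(τ+1)))
        / (r * A^3 * τ * (A+t) * (A-t)) := by
    field_simp
    ring
  have h3A : (3:ℝ) + Real.log r = A + 2 := by rw [hAdef]; ring
  rw [h3A, hid]
  apply div_nonneg (by linarith) (by positivity)
end

section
/- Let U : [0,∞) → ℝ be a bounded monotone decreasing function with U(r) = 1/(r log(er)) for r > 1, and Φ_U(r,τ) := U(r) - U(rτ) + (U(r)-U(r/τ))/τ. Then for all r > 2 and all τ ∈ [r,∞), Φ_U(r,τ) < U(r). -/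
open Real

/-- for a bounded positive monotone decreasing `U` on `[0,∞)`
agreeing with `1/(r log(er))` for `r > 1`, one has `Φ_U(r,τ) < U(r)` for all
`r > 2` and `τ ∈ [r,∞)`. -/
theorem log_barrier_Phi_upper (U : ℝ → ℝ)
    (hU_bdd : ∃ M : ℝ, ∀ r : ℝ, 0 ≤ r → U r ≤ M)
    (hU_pos : ∀ r : ℝ, 0 ≤ r → 0 < U r)
    (hU_anti : AntitoneOn U (Set.Ici (0 : ℝ)))
    (hU_eq : ∀ r : ℝ, 1 < r → U r = 1 / (r * Real.log (Real.exp 1 * r))) :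
    ∀ r τ : ℝ, 2 < r → r ≤ τ →
      U r - U (r * τ) + (U r - U (r / τ)) / τ < U r := by
  intro r τ hr hτ
  have hr0 : (0:ℝ) < r := by linarith
  have hτ0 : (0:ℝ) < τ := by linarith
  have hrτ : (0:ℝ) ≤ r * τ := by positivity
  have hdiv : (0:ℝ) ≤ r / τ := by positivity
  have hle : r / τ ≤ r := by
    rw [div_le_iff₀ hτ0]; nlinarith
  have h1 : U r ≤ U (r / τ) := hU_anti hdiv (le_of_lt hr0) hle
  have h2 : (U r - U (r / τ)) / τ ≤ 0 := div_nonpos_of_nonpos_of_nonneg (by linarith) hτ0.le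
  have h3 : 0 < U (r * τ) := hU_pos _ hrτ
  linarith
end

section
/- Let z ∈ (0, 1/2] and A := 1/z ≥ 2. Then for all x ∈ [0, log 2] with A > 2x, one has 1/A - 1/(A-x) + e^{-x}(1/A - 1/(A+x)) + 4x²/A² ≥ (3x²/A²)(1 - 1/A) ≥ 0. -/
open Real

/-- the key elementary inequality in the logarithmic barrier
estimate. -/
theorem log_barrier_key_ineq (z : ℝ) (hz0 : 0 < z) (hz : z ≤ 1 / 2)
    (x : ℝ) (hx0 : 0 ≤ x) (hx : x ≤ Real.log 2) (hA : 2 * x < 1 / z) :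
    (3 * x ^ 2 / (1 / z) ^ 2) * (1 - 1 / (1 / z)) ≥ 0 ∧
    1 / (1 / z) - 1 / (1 / z - x)
        + Real.exp (-x) * (1 / (1 / z) - 1 / (1 / z + x))
        + 4 * x ^ 2 / (1 / z) ^ 2 ≥
      (3 * x ^ 2 / (1 / z) ^ 2) * (1 - 1 / (1 / z)) := by
  have hx7 : x < 0.7 := lt_of_le_of_lt hx (by
    have := Real.log_two_lt_d9; linarith)
  have hinv : (1 / z) * z = 1 := one_div_mul_cancel hz0.ne'
  have hzx : 2 * (z * x) < 1 := by nlinarith [mul_lt_mul_of_pos_right hA hz0]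
  have h1m : (0:ℝ) < 1 - z * x := by nlinarith
  have h1p : (0:ℝ) < 1 + z * x := by nlinarith
  have hd1 : 0 < 1 / z - x := by
    have : (0:ℝ) < 1 / z := by positivity
    linarith
  have hd2 : 0 < 1 / z + x := by positivity
  rw [one_div_one_div]
  have e1 : 1 / (1 / z - x) = z / (1 - z * x) := by
    rw [div_eq_div_iff hd1.ne' h1m.ne']; field_simp
  have e2 : 1 / (1 / z + x) = z / (1 + z * x) := by
    rw [div_eq_div_iff hd2.ne' h1p.ne']; field_simp
  have e3 : 4 * x ^ 2 / (1 / z) ^ 2 = 4 * x ^ 2 * z ^ 2 := by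
    field_simp
  have e4 : 3 * x ^ 2 / (1 / z) ^ 2 = 3 * x ^ 2 * z ^ 2 := by
    field_simp
  rw [e1, e2, e3, e4]
  constructor
  · have : 1 - z ≥ 0 := by linarith
    positivity
  · have ht : 0 ≤ z - z / (1 + z * x) := by
      have : z / (1 + z * x) ≤ z := by
        apply div_le_self hz0.le; nlinarith
      linarith
    have he : 1 - x ≤ Real.exp (-x) := by
      have := Real.add_one_le_exp (-x); linarith
    have hexp : (1 - x) * (z - z / (1 + z * x)) ≤
        Real.exp (-x) * (z - z / (1 + z * x)) :=
      mul_le_mul_of_nonneg_right he ht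
    have key : z - z / (1 - z * x) + (1 - x) * (z - z / (1 + z * x))
        + 4 * x ^ 2 * z ^ 2 ≥ 3 * x ^ 2 * z ^ 2 * (1 - z) := by
      rw [ge_iff_le, ← sub_nonneg]
      have heq : z - z / (1 - z * x) + (1 - x) * (z - z / (1 + z * x))
          + 4 * x ^ 2 * z ^ 2 - 3 * x ^ 2 * z ^ 2 * (1 - z)
          = z ^ 3 * x ^ 2 * (1 + x - z * x ^ 2 * (1 + 3 * z))
            / ((1 - z * x) * (1 + z * x)) := by
        field_simp
        ring
      rw [heq]
      apply div_nonneg _ (by positivity)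
      have hx2 : x ^ 2 ≤ 0.7 * x := by nlinarith
      have h13 : z * (1 + 3 * z) ≤ 5 / 4 := by nlinarith
      have h5 : z * x ^ 2 * (1 + 3 * z) ≤ 1 + x := by
        have := mul_le_mul_of_nonneg_left h13 (sq_nonneg x)
        nlinarith
      exact mul_nonneg (by positivity) (by linarith)
    linarith
end

section
/- Suppose F : ℝ → ℝ is continuous, positive for large t, satisfies F(t) = G(t) + O(t^{-2}) as t → +∞ where G(t) := ∫_t^∞ F²(t') dt' is finite for large t, and F(t) ~ t^{-1} as t → +∞ (i.e., c₁/t ≤ F(t) ≤ c₂/t for large t). Then F(t) = 1/(t + O(log t)) as t → +∞; in particular lim_{t→∞} t F(t) = 1. -/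
open Real MeasureTheory Filter Asymptotics Set Topology

/-! With `G t = ∫_t^∞ F²` we have `G' = -F²`, hence `(1/G)' = F²/G² = 1 + O(1/t)`, because
`F² - G² = (F - G)(F + G) = O(t⁻³)` while `G ≍ 1/t`. Integrating, `1/G = t + O(log t)`, and
`1/F - 1/G = (G - F)/(F G) = O(1)`. Finally `t F - 1 = -F (1/F - t) = O(log t / t)`. -/

lemma hasDerivAt_integral_Ioi {E : Type*} [NormedAddCommGroup E] [NormedSpace ℝ E]
    [CompleteSpace E] {f : ℝ → E} {a t : ℝ} (hf : IntegrableOn f (Ioi a))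
    (hft : ContinuousAt f t) (ht : a < t) :
    HasDerivAt (fun x => ∫ s in Ioi x, f s) (-f t) t := by
  have hprim : HasDerivAt (fun x => ∫ s in a..x, f s) (f t) t :=
    intervalIntegral.integral_hasDerivAt_right
      ((intervalIntegrable_iff_integrableOn_Ioc_of_le ht.le).2 (hf.mono_set Ioc_subset_Ioi_self))
      ⟨Ioi a, Ioi_mem_nhds ht, hf.aestronglyMeasurable⟩ hft
  refine ((hasDerivAt_const t (∫ s in Ioi a, f s)).sub hprim).congr_deriv (zero_sub _)
    |>.congr_of_eventuallyEq ?_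
  filter_upwards [Ioi_mem_nhds ht] with x hx
  exact (sub_eq_of_eq_add' (intervalIntegral.integral_interval_add_Ioi hf
    (hf.mono_set (Ioi_subset_Ioi hx.le))).symm).symm

lemma hasDerivAt_neg_sq_div (c : ℝ) {x : ℝ} (hx : x ≠ 0) :
    HasDerivAt (fun s => -(c ^ 2 / s)) ((c / x) ^ 2) x := by
  have h := ((hasDerivAt_inv hx).const_mul (c ^ 2)).neg
  rw [show (c / x) ^ 2 = -(c ^ 2 * -(x ^ 2)⁻¹) by ring]
  exact h.congr_of_eventuallyEq (.of_eq (funext fun s => by simp [div_eq_mul_inv]))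

lemma integrableOn_Ioi_div_sq (c : ℝ) {t : ℝ} (ht : 0 < t) :
    IntegrableOn (fun s => (c / s) ^ 2) (Ioi t) :=
  integrableOn_Ioi_deriv_of_nonneg' (fun x hx => hasDerivAt_neg_sq_div c (ht.trans_le hx).ne')
    (fun _ _ => sq_nonneg _) (by simpa using (tendsto_const_nhds.div_atTop tendsto_id).neg)

lemma integral_Ioi_div_sq (c : ℝ) {t : ℝ} (ht : 0 < t) :
    ∫ s in Ioi t, (c / s) ^ 2 = c ^ 2 / t := by
  rw [integral_Ioi_of_hasDerivAt_of_nonneg'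
    (fun x hx => hasDerivAt_neg_sq_div c (ht.trans_le hx).ne') (fun _ _ => sq_nonneg _)
    (by simpa using (tendsto_const_nhds.div_atTop tendsto_id).neg)]
  ring

lemma eventually_sq_div_le_integral_Ioi_sq {f : ℝ → ℝ} {a b : ℝ} (ha : 0 ≤ a)
    (hf : ∀ᶠ t in atTop, a / t ≤ f t ∧ f t ≤ b / t)
    (hint : ∀ᶠ t in atTop, IntegrableOn (fun s => f s ^ 2) (Ioi t)) :
    ∀ᶠ t in atTop, a ^ 2 / t ≤ ∫ s in Ioi t, f s ^ 2 ∧ ∫ s in Ioi t, f s ^ 2 ≤ b ^ 2 / t := by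
  obtain ⟨N, hN⟩ := eventually_atTop.1 hf
  filter_upwards [eventually_ge_atTop N, eventually_gt_atTop 0, hint] with t htN ht hft
  have hbounds : ∀ s ∈ Ioi t, 0 ≤ a / s ∧ a / s ≤ f s ∧ f s ≤ b / s := fun s hs =>
    ⟨div_nonneg ha (ht.trans hs).le, hN s (htN.trans hs.le)⟩
  constructor
  · rw [← integral_Ioi_div_sq a ht]
    exact setIntegral_mono_on (integrableOn_Ioi_div_sq a ht) hft measurableSet_Ioi
      fun s hs => pow_le_pow_left₀ (hbounds s hs).1 (hbounds s hs).2.1 2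
  · rw [← integral_Ioi_div_sq b ht]
    exact setIntegral_mono_on hft (integrableOn_Ioi_div_sq b ht) measurableSet_Ioi
      fun s hs => pow_le_pow_left₀ ((hbounds s hs).1.trans (hbounds s hs).2.1) (hbounds s hs).2.2 2

section ComparableToInv

variable {f : ℝ → ℝ} {a b : ℝ}

lemma eventually_pos_of_div_le (ha : 0 < a) (hf : ∀ᶠ t in atTop, a / t ≤ f t) :
    ∀ᶠ t in atTop, 0 < f t := by
  filter_upwards [hf, eventually_gt_atTop 0] with t hft ht
  exact (div_pos ha ht).trans_le hft

lemma isBigO_inv_of_le_div (ha : 0 ≤ a) (hf : ∀ᶠ t in atTop, a / t ≤ f t ∧ f t ≤ b / t) :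
    f =O[atTop] fun t => t⁻¹ := by
  refine .of_bound b ?_
  filter_upwards [hf, eventually_gt_atTop 0] with t ⟨hlow, hup⟩ ht
  rw [norm_of_nonneg ((div_nonneg ha ht.le).trans hlow), norm_of_nonneg (inv_nonneg.2 ht.le)]
  simpa [div_eq_mul_inv] using hup

lemma inv_isBigO_id_of_div_le (ha : 0 < a) (hf : ∀ᶠ t in atTop, a / t ≤ f t) :
    (fun t => (f t)⁻¹) =O[atTop] id := by
  refine .of_bound a⁻¹ ?_
  filter_upwards [hf, eventually_gt_atTop 0] with t hft ht
  have hpos : 0 < a / t := div_pos ha ht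
  rw [norm_inv, norm_of_nonneg (hpos.trans_le hft).le, id, norm_of_nonneg ht.le]
  calc (f t)⁻¹ ≤ (a / t)⁻¹ := inv_anti₀ hpos hft
    _ = a⁻¹ * t := by rw [inv_div, div_eq_inv_mul]

end ComparableToInv

lemma isBigO_log_of_hasDerivAt_of_isBigO_inv {ψ ψ' : ℝ → ℝ}
    (hψ : ∀ᶠ x in atTop, HasDerivAt ψ (ψ' x) x) (hψ' : ψ' =O[atTop] fun x => x⁻¹) :
    ψ =O[atTop] log := by
  obtain ⟨C, hC0, hC⟩ := hψ'.exists_pos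
  rw [isBigOWith_iff] at hC
  obtain ⟨a, ha⟩ := eventually_atTop.1 (hψ.and (hC.and (eventually_ge_atTop 1)))
  have ha1 : 1 ≤ a := (ha a le_rfl).2.2
  have hsub : (fun x => ψ x - ψ a) =O[atTop] log := by
    refine .of_bound C ?_
    filter_upwards [eventually_ge_atTop a] with t hat
    have hpos : ∀ x ∈ Icc a t, 0 < x := fun x hx => one_pos.trans_le (ha1.trans hx.1)
    have hB : ∀ x ∈ Icc a t, HasDerivAt (fun x => C * (log x - log a)) (C * x⁻¹) x :=
      fun x hx => ((hasDerivAt_log (hpos x hx).ne').sub_const (log a)).const_mul C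
    have hfence := image_norm_le_of_norm_deriv_right_le_deriv_boundary'
      (f := fun x => ψ x - ψ a) (f' := ψ') (B := fun x => C * (log x - log a))
      (B' := fun x => C * x⁻¹)
      (fun x hx => ((ha x hx.1).1.continuousAt.sub continuousAt_const).continuousWithinAt)
      (fun x hx => ((ha x hx.1).1.sub_const (ψ a)).hasDerivWithinAt) (by simp)
      (fun x hx => (hB x hx).continuousAt.continuousWithinAt)
      (fun x hx => (hB x (Ico_subset_Icc_self hx)).hasDerivWithinAt)
      (fun x hx => by
        simpa [norm_of_nonneg (inv_nonneg.2 (hpos x (Ico_subset_Icc_self hx)).le)] using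
          (ha x hx.1).2.1)
      (right_mem_Icc.2 hat)
    rw [norm_of_nonneg (log_nonneg (ha1.trans hat))]
    exact hfence.trans (by nlinarith [log_nonneg ha1])
  simpa using hsub.add (isLittleO_const_log_atTop (c := ψ a)).isBigO

section InverseAsymptotics

variable {F G : ℝ → ℝ}

lemma inv_sub_inv_isBigO_one (hFG : (fun t => F t - G t) =O[atTop] fun t => 1 / t ^ 2)
    (hF : (fun t => (F t)⁻¹) =O[atTop] id) (hG : (fun t => (G t)⁻¹) =O[atTop] id)
    (hF0 : ∀ᶠ t in atTop, F t ≠ 0) (hG0 : ∀ᶠ t in atTop, G t ≠ 0) :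
    (fun t => (F t)⁻¹ - (G t)⁻¹) =O[atTop] fun _ => (1 : ℝ) := by
  refine ((hFG.neg_left.mul hF).mul hG).congr' ?_ ?_
  · filter_upwards [hF0, hG0] with t hFt hGt
    field_simp
    ring
  · filter_upwards [eventually_ne_atTop 0] with t ht
    field_simp
    simp

lemma sq_div_sq_sub_one_isBigO_inv (hFG : (fun t => F t - G t) =O[atTop] fun t => 1 / t ^ 2)
    (hF : F =O[atTop] fun t => t⁻¹) (hG : G =O[atTop] fun t => t⁻¹)
    (hG' : (fun t => (G t)⁻¹) =O[atTop] id) (hG0 : ∀ᶠ t in atTop, G t ≠ 0) :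
    (fun t => F t ^ 2 / G t ^ 2 - 1) =O[atTop] fun t => t⁻¹ := by
  refine (((hFG.mul (hF.add hG)).mul hG').mul hG').congr' ?_ ?_
  · filter_upwards [hG0] with t hGt
    field_simp
    ring
  · filter_upwards [eventually_ne_atTop 0] with t ht
    field_simp
    simp

lemma tendsto_mul_of_inv_sub_isBigO_log (hF : F =O[atTop] fun t => t⁻¹)
    (hF0 : ∀ᶠ t in atTop, F t ≠ 0) (h : (fun t => (F t)⁻¹ - t) =O[atTop] log) :
    Tendsto (fun t => t * F t) atTop (𝓝 1) := by
  rw [← tendsto_sub_nhds_zero_iff]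
  refine ((hF.mul h).neg_left.congr' ?_ .rfl).trans_tendsto ?_
  · filter_upwards [hF0] with t ht
    field_simp
    ring
  · simpa [div_eq_inv_mul] using isLittleO_log_id_atTop.tendsto_div_nhds_zero

lemma inv_sub_isBigO_log_of_hasDerivAt {a₁ b₁ a₂ b₂ : ℝ} (ha₁ : 0 < a₁) (ha₂ : 0 < a₂)
    (hF : ∀ᶠ t in atTop, a₁ / t ≤ F t ∧ F t ≤ b₁ / t)
    (hG : ∀ᶠ t in atTop, a₂ / t ≤ G t ∧ G t ≤ b₂ / t)
    (hFG : (fun t => F t - G t) =O[atTop] fun t => 1 / t ^ 2)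
    (hG_deriv : ∀ᶠ t in atTop, HasDerivAt G (-(F t ^ 2)) t) :
    (fun t => (F t)⁻¹ - t) =O[atTop] log := by
  have hF_low := hF.mono fun _ => And.left
  have hG_low := hG.mono fun _ => And.left
  have hG0 := eventually_pos_of_div_le ha₂ hG_low
  have hG' := inv_isBigO_id_of_div_le ha₂ hG_low
  have hderiv : ∀ᶠ t in atTop,
      HasDerivAt (fun t => (G t)⁻¹ - t) (F t ^ 2 / G t ^ 2 - 1) t := by
    filter_upwards [hG_deriv, hG0] with t hGt hGpos
    exact ((hGt.inv hGpos.ne').sub (hasDerivAt_id' t)).congr_deriv (by rw [neg_neg])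
  have hGinv_sub : (fun t => (G t)⁻¹ - t) =O[atTop] log :=
    isBigO_log_of_hasDerivAt_of_isBigO_inv hderiv <| sq_div_sq_sub_one_isBigO_inv hFG
      (isBigO_inv_of_le_div ha₁.le hF) (isBigO_inv_of_le_div ha₂.le hG) hG'
      (hG0.mono fun _ => ne_of_gt)
  have hFinv_sub_Ginv : (fun t => (F t)⁻¹ - (G t)⁻¹) =O[atTop] log :=
    (inv_sub_inv_isBigO_one hFG (inv_isBigO_id_of_div_le ha₁ hF_low) hG'
      ((eventually_pos_of_div_le ha₁ hF_low).mono fun _ => ne_of_gt)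
      (hG0.mono fun _ => ne_of_gt)).trans
      isLittleO_const_log_atTop.isBigO
  exact (hFinv_sub_Ginv.add hGinv_sub).congr_left fun t => by ring

end InverseAsymptotics

theorem F_asymptotics_general (F : ℝ → ℝ) (hF_cont : Continuous F)
    (c₁ c₂ T : ℝ) (hc₁ : 0 < c₁)
    (hF_bounds : ∀ t : ℝ, T ≤ t → c₁ / t ≤ F t ∧ F t ≤ c₂ / t)
    (hG_int : ∀ t : ℝ, T ≤ t →
      MeasureTheory.IntegrableOn (fun s => (F s) ^ 2) (Set.Ioi t) volume)
    (hFG : (fun t : ℝ => F t - ∫ s in Set.Ioi t, (F s) ^ 2) =O[atTop]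
      (fun t : ℝ => 1 / t ^ 2)) :
    (∃ C : ℝ, 0 < C ∧ ∀ᶠ t : ℝ in atTop, |1 / F t - t| ≤ C * Real.log t) ∧
    Tendsto (fun t : ℝ => t * F t) atTop (nhds 1) := by
  have hF : ∀ᶠ t in atTop, c₁ / t ≤ F t ∧ F t ≤ c₂ / t := eventually_atTop.2 ⟨T, hF_bounds⟩
  have hG := eventually_sq_div_le_integral_Ioi_sq hc₁.le hF (eventually_atTop.2 ⟨T, hG_int⟩)
  have hG_deriv : ∀ᶠ t in atTop, HasDerivAt (fun t => ∫ s in Ioi t, F s ^ 2) (-(F t ^ 2)) t := by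
    filter_upwards [eventually_gt_atTop T] with t ht
    exact hasDerivAt_integral_Ioi (hG_int T le_rfl) (hF_cont.pow 2).continuousAt ht
  have hlog := inv_sub_isBigO_log_of_hasDerivAt hc₁ (by positivity) hF hG hFG hG_deriv
  refine ⟨?_, tendsto_mul_of_inv_sub_isBigO_log (isBigO_inv_of_le_div hc₁.le hF)
    ((eventually_pos_of_div_le hc₁ (hF.mono fun _ => And.left)).mono fun _ => ne_of_gt) hlog⟩
  obtain ⟨C, hC, hbound⟩ := hlog.exists_pos
  refine ⟨C, hC, ?_⟩
  filter_upwards [isBigOWith_iff.1 hbound, eventually_ge_atTop 1] with t ht ht1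
  simpa [norm_of_nonneg (log_nonneg ht1)] using ht

/-- if `F(t) = G(t) + O(t⁻²)` with `G(t) = ∫_t^∞ F²` and
`F(t) ∼ t⁻¹`, then `F(t) = 1/(t + O(log t))`; in particular `t F(t) → 1`. -/
theorem F_asymptotics (F : ℝ → ℝ) (hF_cont : Continuous F)
    (c₁ c₂ T : ℝ) (hc₁ : 0 < c₁) (hc₁₂ : c₁ ≤ c₂) (hT : 0 < T)
    (hF_bounds : ∀ t : ℝ, T ≤ t → c₁ / t ≤ F t ∧ F t ≤ c₂ / t)
    (hG_int : ∀ t : ℝ, T ≤ t →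
      MeasureTheory.IntegrableOn (fun s => (F s) ^ 2) (Set.Ioi t) volume)
    (hFG : (fun t : ℝ => F t - ∫ s in Set.Ioi t, (F s) ^ 2) =O[atTop]
      (fun t : ℝ => 1 / t ^ 2)) :
    (∃ C : ℝ, 0 < C ∧ ∀ᶠ t : ℝ in atTop, |1 / F t - t| ≤ C * Real.log t) ∧
    Tendsto (fun t : ℝ => t * F t) atTop (nhds 1) :=
  F_asymptotics_general F hF_cont c₁ c₂ T hc₁ hF_bounds hG_int hFG
end

section
/- Let z ∈ (0,1) and define I(z) := ∫_{log 2}^{1/z} ( (x z² e^{-x})/((z+1)(xz+z+1)) + z/((x-1)z-1) + z/(z+1) ) e^{-x} dx. Then I(z) = -((7+6 log 2)/16) z² + O(z³) as z → 0⁺. -/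
/-!
To second order in `z` the integrand is `z² x (e^{-2x} - e^{-x})`, and on `[0, 1/z]` the rest is
bounded by `4 z³ (1 + x²) e^{-x/2}`: the only delicate factor, `1 / (1 + z - x z)`, stays below
`2 e^{x/2}` because `x z ≤ 1`. So the rest contributes `O(z³)`, while the leading part integrates in
closed form; its antiderivative is `(7 + 6 log 2) z² / 16` at `log 2` and only `O(z³)` at `1/z`,
since `e^{-1/z} ≤ 2 z²`.
-/

open Real Filter Asymptotics MeasureTheory intervalIntegral

lemma sq_mul_exp_neg_le_two {x : ℝ} (hx : 0 ≤ x) : x ^ 2 * exp (-x) ≤ 2 := by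
  have h := pow_div_factorial_le_exp x hx 2
  rw [exp_neg, ← div_eq_mul_inv, div_le_iff₀ (exp_pos x)]
  norm_num [Nat.factorial] at h
  linarith

lemma inv_one_add_sub_mul_le {x z : ℝ} (hz : 0 < z) (hx : 0 ≤ x) (hxz : x * z ≤ 1) :
    (1 + z - x * z)⁻¹ ≤ 2 * exp (x / 2) := by
  have hpos : 0 < 1 + z - x * z := by linarith
  rw [inv_le_iff_one_le_mul₀ hpos]
  have hexp := mul_le_mul_of_nonneg_left (add_one_le_exp (x / 2)) hpos.le
  nlinarith [mul_nonneg hx (sub_nonneg.2 hxz)]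

noncomputable def integrand (z x : ℝ) : ℝ :=
  ((x * z ^ 2 * exp (-x)) / ((z + 1) * (x * z + z + 1))
    + z / ((x - 1) * z - 1) + z / (z + 1)) * exp (-x)

noncomputable def mainPart (z x : ℝ) : ℝ :=
  z ^ 2 * (x * exp (-x) ^ 2 - x * exp (-x))

noncomputable def mainPartAntideriv (z x : ℝ) : ℝ :=
  z ^ 2 * ((x + 1) * exp (-x) - (x / 2 + 1 / 4) * exp (-x) ^ 2)

noncomputable def remainder (z x : ℝ) : ℝ :=
  z ^ 3 * ((1 / (z + 1) - (x + 1) ^ 2 / (x * z + z + 1)) * exp (-x) ^ 2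
    + (1 / (z + 1) - (x - 1) ^ 2 / (1 + z - x * z)) * exp (-x))

lemma integrand_eq_mainPart_add_remainder {z x : ℝ} (h₁ : z + 1 ≠ 0)
    (h₂ : x * z + z + 1 ≠ 0) (h₃ : 1 + z - x * z ≠ 0) :
    integrand z x = mainPart z x + remainder z x := by
  unfold integrand mainPart remainder
  -- `field_simp` only cancels denominators whose nonvanishing it finds in the shape it normalizes to
  rw [show (x - 1) * z - 1 = -(1 + z - x * z) by ring]
  have h₂' : z * (x + 1) + 1 ≠ 0 := by rwa [show z * (x + 1) + 1 = x * z + z + 1 by ring]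
  field_simp
  ring

lemma hasDerivAt_mainPartAntideriv (z x : ℝ) :
    HasDerivAt (mainPartAntideriv z) (mainPart z x) x := by
  have hE : HasDerivAt (fun x => exp (-x)) (-exp (-x)) x := by
    simpa using (hasDerivAt_neg x).exp
  have h := ((((hasDerivAt_id' x).add_const 1).mul hE).sub
    ((((hasDerivAt_id' x).div_const 2).add_const (1 / 4)).mul (hE.pow 2))).const_mul (z ^ 2)
  refine h.congr_deriv ?_
  simp only [mainPart, Pi.pow_apply]
  push_cast
  ring

lemma abs_mainPartAntideriv_inv_le {z : ℝ} (hz : 0 < z) (hz1 : z ≤ 1) :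
    |mainPartAntideriv z (1 / z)| ≤ 4 * z ^ 3 := by
  set b := 1 / z with hb
  set t := exp (-b)
  have hb1 : 1 ≤ b := by rw [hb, le_div_iff₀ hz]; linarith
  have ht0 : 0 < t := exp_pos _
  have ht1 : t ≤ 1 := exp_le_one_iff.2 (by linarith)
  have hbt : b * t ≤ 2 * z := by
    have h := sq_mul_exp_neg_le_two (x := b) (by linarith)
    rw [hb] at h ⊢
    field_simp at h ⊢
    linarith
  have hbound : |(b + 1) * t - (b / 2 + 1 / 4) * t ^ 2| ≤ (b + 1) * t :=
    abs_sub_le_of_nonneg_of_le (by positivity) le_rfl (by positivity) (by nlinarith)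
  calc |mainPartAntideriv z b| = z ^ 2 * |(b + 1) * t - (b / 2 + 1 / 4) * t ^ 2| := by
        rw [mainPartAntideriv, abs_mul, abs_of_nonneg (by positivity)]
    _ ≤ z ^ 2 * (2 * (b * t)) := by gcongr; nlinarith
    _ ≤ z ^ 2 * (2 * (2 * z)) := by gcongr
    _ = 4 * z ^ 3 := by ring

lemma mainPartAntideriv_log_two (z : ℝ) :
    mainPartAntideriv z (log 2) = (7 + 6 * log 2) / 16 * z ^ 2 := by
  have h : exp (-log 2) = 1 / 2 := by rw [exp_neg, exp_log two_pos, one_div]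
  rw [mainPartAntideriv, h]
  ring

lemma abs_remainder_le {z x : ℝ} (hz : 0 < z) (hx : 0 ≤ x) (hxz : x * z ≤ 1) :
    |remainder z x| ≤ 4 * z ^ 3 * ((1 + x ^ 2) * exp (-(x / 2))) := by
  have hd₁ : 0 < x * z + z + 1 := by positivity
  have hd₂ : 0 < 1 + z - x * z := by linarith
  have hz₁ : 1 / (z + 1) ≤ 1 := by rw [div_le_one (by positivity)]; linarith
  have he₁ : 1 ≤ exp (x / 2) := one_le_exp (by positivity)
  have hA : |1 / (z + 1) - (x + 1) ^ 2 / (x * z + z + 1)| ≤ 2 * (1 + x ^ 2) := by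
    refine abs_sub_le_of_nonneg_of_le (by positivity) (by nlinarith) (by positivity) ?_
    calc (x + 1) ^ 2 / (x * z + z + 1) ≤ (x + 1) ^ 2 :=
          div_le_self (sq_nonneg _) (by nlinarith [mul_nonneg hx hz.le])
      _ ≤ 2 * (1 + x ^ 2) := by nlinarith [sq_nonneg (x - 1)]
  have hB : |1 / (z + 1) - (x - 1) ^ 2 / (1 + z - x * z)| ≤ 2 * (1 + x ^ 2) * exp (x / 2) := by
    refine abs_sub_le_of_nonneg_of_le (by positivity) (by nlinarith) (by positivity) ?_
    calc (x - 1) ^ 2 / (1 + z - x * z) = (x - 1) ^ 2 * (1 + z - x * z)⁻¹ := div_eq_mul_inv _ _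
      _ ≤ (1 + x ^ 2) * (2 * exp (x / 2)) := by
        gcongr
        · nlinarith
        · exact inv_one_add_sub_mul_le hz hx hxz
      _ = 2 * (1 + x ^ 2) * exp (x / 2) := by ring
  have hsq : exp (-x) ^ 2 ≤ exp (-(x / 2)) := by
    rw [← exp_nat_mul]; exact exp_le_exp.2 (by push_cast; linarith)
  have hmul : exp (x / 2) * exp (-x) = exp (-(x / 2)) := by rw [← exp_add]; ring_nf
  calc |remainder z x|
      ≤ z ^ 3 * (|1 / (z + 1) - (x + 1) ^ 2 / (x * z + z + 1)| * exp (-x) ^ 2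
          + |1 / (z + 1) - (x - 1) ^ 2 / (1 + z - x * z)| * exp (-x)) := by
        rw [remainder, abs_mul, abs_of_pos (by positivity)]
        gcongr
        refine (abs_add_le _ _).trans_eq ?_
        rw [abs_mul, abs_mul, abs_of_pos (pow_pos (exp_pos _) 2), abs_of_pos (exp_pos _)]
    _ ≤ z ^ 3 * (2 * (1 + x ^ 2) * exp (-(x / 2)) + 2 * (1 + x ^ 2) * exp (x / 2) * exp (-x)) := by
        gcongr
    _ = 4 * z ^ 3 * ((1 + x ^ 2) * exp (-(x / 2))) := by rw [mul_assoc _ (exp _), hmul]; ring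

lemma integral_one_add_sq_mul_exp_neg_half_le {a b : ℝ} (ha : 0 ≤ a) (hab : a ≤ b) :
    ∫ x in a..b, (1 + x ^ 2) * exp (-(x / 2)) ≤ 18 := by
  set Φ : ℝ → ℝ := fun x => -(2 * x ^ 2 + 8 * x + 18) * exp (-(x / 2))
  have hΦ : ∀ x, HasDerivAt Φ ((1 + x ^ 2) * exp (-(x / 2))) x := fun x => by
    have h := (((hasDerivAt_pow 2 x).const_mul 2).add ((hasDerivAt_id' x).const_mul 8)).add_const 18
    refine (h.neg.mul ((hasDerivAt_id' x).div_const 2).neg.exp).congr_deriv ?_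
    simp only [Pi.add_apply, Pi.neg_apply]
    push_cast
    ring
  have hint : IntervalIntegrable (fun x => (1 + x ^ 2) * exp (-(x / 2))) volume 0 b := by
    apply Continuous.intervalIntegrable; fun_prop
  calc ∫ x in a..b, (1 + x ^ 2) * exp (-(x / 2))
      ≤ ∫ x in (0 : ℝ)..b, (1 + x ^ 2) * exp (-(x / 2)) :=
        integral_mono_interval ha hab le_rfl (ae_of_all _ fun x => by positivity) hint
    _ = Φ b - Φ 0 := integral_eq_sub_of_hasDerivAt (fun x _ => hΦ x) hint
    _ ≤ 18 := by
        have : 0 ≤ (2 * b ^ 2 + 8 * b + 18) * exp (-(b / 2)) := by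
          have := ha.trans hab; positivity
        norm_num [Φ]
        linarith

lemma continuousOn_remainder {z a b : ℝ} (hz : 0 < z) (ha : 0 ≤ a) (hb : b ≤ 1 / z) :
    ContinuousOn (remainder z) (Set.Icc a b) := by
  intro x hx
  have hxz : x * z ≤ 1 := (le_div_iff₀ hz).1 (hx.2.trans hb)
  have h₁ : z + 1 ≠ 0 := by positivity
  have h₂ : x * z + z + 1 ≠ 0 := by have := ha.trans hx.1; positivity
  have h₃ : 1 + z - x * z ≠ 0 := by linarith
  apply ContinuousAt.continuousWithinAt
  unfold remainder
  fun_prop (disch := assumption)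

lemma integral_integrand_eq {z a b : ℝ} (hz : 0 < z) (ha : 0 ≤ a) (hab : a ≤ b)
    (hb : b ≤ 1 / z) :
    ∫ x in a..b, integrand z x
      = mainPartAntideriv z b - mainPartAntideriv z a + ∫ x in a..b, remainder z x := by
  have hmain : IntervalIntegrable (mainPart z) volume a b := by
    apply Continuous.intervalIntegrable; unfold mainPart; fun_prop
  have hrem : IntervalIntegrable (remainder z) volume a b :=
    (continuousOn_remainder hz ha hb).intervalIntegrable_of_Icc hab
  rw [integral_congr (g := fun x => mainPart z x + remainder z x), integral_add hmain hrem,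
    integral_eq_sub_of_hasDerivAt (fun x _ => hasDerivAt_mainPartAntideriv z x) hmain]
  intro x hx
  rw [Set.uIcc_of_le hab] at hx
  have hxz : x * z ≤ 1 := (le_div_iff₀ hz).1 (hx.2.trans hb)
  have := ha.trans hx.1
  exact integrand_eq_mainPart_add_remainder (by positivity) (by positivity) (by linarith)

lemma abs_integral_remainder_le {z a b : ℝ} (hz : 0 < z) (ha : 0 ≤ a) (hab : a ≤ b)
    (hb : b ≤ 1 / z) :
    |∫ x in a..b, remainder z x| ≤ 72 * z ^ 3 := by
  have hbound : ∀ᵐ x, x ∈ Set.Ioc a b →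
      ‖remainder z x‖ ≤ 4 * z ^ 3 * ((1 + x ^ 2) * exp (-(x / 2))) :=
    ae_of_all _ fun x hx =>
      abs_remainder_le hz (ha.trans hx.1.le) ((le_div_iff₀ hz).1 (hx.2.trans hb))
  calc |∫ x in a..b, remainder z x|
      ≤ ∫ x in a..b, 4 * z ^ 3 * ((1 + x ^ 2) * exp (-(x / 2))) :=
        norm_integral_le_of_norm_le hab hbound (by apply Continuous.intervalIntegrable; fun_prop)
    _ = 4 * z ^ 3 * ∫ x in a..b, (1 + x ^ 2) * exp (-(x / 2)) := integral_const_mul _ _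
    _ ≤ 4 * z ^ 3 * 18 := by gcongr; exact integral_one_add_sq_mul_exp_neg_half_le ha hab
    _ = 72 * z ^ 3 := by ring

lemma abs_integral_integrand_add_le {z : ℝ} (hz : 0 < z) (hz1 : z < 1) :
    |(∫ x in log 2..1 / z, integrand z x) + (7 + 6 * log 2) / 16 * z ^ 2| ≤ 76 * z ^ 3 := by
  have hlog : 0 ≤ log 2 := log_nonneg one_le_two
  have hb : log 2 ≤ 1 / z := by
    rw [le_div_iff₀ hz]; nlinarith [log_two_lt_d9]
  rw [integral_integrand_eq hz hlog hb le_rfl, mainPartAntideriv_log_two]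
  calc _ = |mainPartAntideriv z (1 / z) + ∫ x in log 2..1 / z, remainder z x| := by congr 1; ring
    _ ≤ 4 * z ^ 3 + 72 * z ^ 3 :=
        (abs_add_le _ _).trans (add_le_add (abs_mainPartAntideriv_inv_le hz hz1.le)
          (abs_integral_remainder_le hz hlog hb le_rfl))
    _ = 76 * z ^ 3 := by ring

/-- asymptotics of the integral `I(z)` arising in the evaluation
of the half-Laplacian of the logarithmic barrier. -/
theorem I_asymptotics :
    (fun z : ℝ =>
        (∫ x in (Real.log 2)..(1 / z),
          ((x * z ^ 2 * Real.exp (-x)) / ((z + 1) * (x * z + z + 1))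
            + z / ((x - 1) * z - 1) + z / (z + 1)) * Real.exp (-x))
          + ((7 + 6 * Real.log 2) / 16) * z ^ 2)
      =O[nhdsWithin 0 (Set.Ioi (0 : ℝ))] (fun z : ℝ => z ^ 3) := by
  refine IsBigO.of_bound 76 ?_
  filter_upwards [Ioo_mem_nhdsGT one_pos] with z hz
  rw [norm_eq_abs, norm_eq_abs, abs_of_pos (pow_pos hz.1 3)]
  exact abs_integral_integrand_add_le hz.1 hz.2
end

section
/- Let U : [0,∞) → ℝ be bounded with U(r) = 1/(r log(er)) for r > 1, and let Φ_U(r,τ) := U(r) - U(rτ) + (U(r)-U(r/τ))/τ. Then for z := 1/log r ∈ (0, 1/2), |∫_r^∞ Φ_U(r,τ) τ^{-2} r dτ| ≤ (1 + U(0)/2) e^{-1/z}, i.e. the tail integral is exponentially small in log r. -/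
/-!
For `s > 1` the barrier satisfies `0 ≤ U s ≤ 1 / s`, so in `Φ_U(r, τ)` the difference
`U r - U (r τ)` is at most `1 / r` and `U r - U (r / τ)` at most `U 0`. Integrating the resulting
bound `(1 / r + U 0 / τ) τ⁻² r` over `τ > r` gives `(1 + U 0 / 2) / r`, and `e^{-1/z} = 1 / r`.
-/

open Real MeasureTheory Set

/-- The paper's `Φ_U(r, τ)`. -/
noncomputable def barrierPhi (U : ℝ → ℝ) (r τ : ℝ) : ℝ :=
  U r - U (r * τ) + (U r - U (r / τ)) / τ

lemma one_div_mul_log_exp_one_mul_le_inv {s : ℝ} (hs : 1 ≤ s) :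
    1 / (s * log (exp 1 * s)) ≤ s⁻¹ := by
  have hs0 : 0 < s := one_pos.trans_le hs
  have hlog : 1 ≤ log (exp 1 * s) := by
    rw [log_mul (exp_pos 1).ne' hs0.ne', log_exp]
    linarith [log_nonneg hs]
  rw [one_div]
  exact inv_anti₀ hs0 (le_mul_of_one_le_right hs0.le hlog)

lemma abs_barrierPhi_le {U : ℝ → ℝ} (hU_bdd : ∀ s : ℝ, 0 ≤ s → 0 ≤ U s ∧ U s ≤ U 0)
    (hU_le_inv : ∀ s : ℝ, 1 < s → U s ≤ s⁻¹) {r τ : ℝ} (hr : 1 < r) (hτ : r ≤ τ) :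
    |barrierPhi U r τ| ≤ r⁻¹ + U 0 * τ⁻¹ := by
  have hr0 : 0 < r := one_pos.trans hr
  have hτ0 : 0 < τ := hr0.trans_le hτ
  have hrτ : r ≤ r * τ := le_mul_of_one_le_right hr0.le (hr.le.trans hτ)
  have h_near : |U r - U (r * τ)| ≤ r⁻¹ :=
    abs_sub_le_of_nonneg_of_le (hU_bdd r hr0.le).1 (hU_le_inv r hr)
      (hU_bdd _ (by positivity)).1
      ((hU_le_inv _ (hr.trans_le hrτ)).trans (inv_anti₀ hr0 hrτ))
  have h_far : |U r - U (r / τ)| ≤ U 0 :=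
    abs_sub_le_of_nonneg_of_le (hU_bdd r hr0.le).1 (hU_bdd r hr0.le).2
      (hU_bdd _ (by positivity)).1 (hU_bdd _ (by positivity)).2
  calc |barrierPhi U r τ| ≤ |U r - U (r * τ)| + |U r - U (r / τ)| * τ⁻¹ := by
        rw [barrierPhi, ← abs_of_pos (inv_pos.2 hτ0), ← abs_mul, ← div_eq_mul_inv]
        exact abs_add_le _ _
    _ ≤ r⁻¹ + U 0 * τ⁻¹ := by gcongr

lemma inv_pow_eq_rpow_neg {t : ℝ} (ht : 0 ≤ t) (n : ℕ) : t⁻¹ ^ n = t ^ (-(n : ℝ)) := by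
  rw [rpow_neg ht, rpow_natCast, inv_pow]

lemma integrableOn_Ioi_inv_pow {c : ℝ} (hc : 0 < c) (n : ℕ) :
    IntegrableOn (fun t : ℝ => t⁻¹ ^ (n + 2)) (Ioi c) := by
  refine (integrableOn_Ioi_rpow_of_lt (a := -((n + 2 : ℕ) : ℝ)) ?_ hc).congr_fun
    (fun t ht => (inv_pow_eq_rpow_neg (hc.trans ht).le _).symm) measurableSet_Ioi
  push_cast
  linarith [n.cast_nonneg (α := ℝ)]

lemma integral_Ioi_inv_pow {c : ℝ} (hc : 0 < c) (n : ℕ) :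
    ∫ t in Ioi c, t⁻¹ ^ (n + 2) = c⁻¹ ^ (n + 1) / (n + 1) := by
  rw [setIntegral_congr_fun measurableSet_Ioi
      (fun t ht => inv_pow_eq_rpow_neg (hc.trans ht).le (n + 2)),
    integral_Ioi_rpow_of_lt (by push_cast; linarith [n.cast_nonneg (α := ℝ)]) hc,
    inv_pow_eq_rpow_neg hc.le]
  push_cast
  rw [show -((n : ℝ) + 2) + 1 = -((n : ℝ) + 1) by ring, neg_div_neg_eq]

lemma abs_integral_Ioi_mul_inv_sq_le {f : ℝ → ℝ} {a b c : ℝ} (hc : 0 < c)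
    (hf : ∀ t, c < t → |f t| ≤ a + b * t⁻¹) :
    |∫ t in Ioi c, f t * t⁻¹ ^ 2| ≤ a * c⁻¹ + b * c⁻¹ ^ 2 / 2 := by
  have hint2 : IntegrableOn (fun t : ℝ => a * t⁻¹ ^ 2) (Ioi c) :=
    (integrableOn_Ioi_inv_pow hc 0).const_mul a
  have hint3 : IntegrableOn (fun t : ℝ => b * t⁻¹ ^ 3) (Ioi c) :=
    (integrableOn_Ioi_inv_pow hc 1).const_mul b
  calc |∫ t in Ioi c, f t * t⁻¹ ^ 2| ≤ ∫ t in Ioi c, (a * t⁻¹ ^ 2 + b * t⁻¹ ^ 3) := by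
        rw [← Real.norm_eq_abs]
        refine norm_integral_le_of_norm_le (hint2.add hint3) ?_
        filter_upwards [ae_restrict_mem measurableSet_Ioi] with t ht
        rw [norm_mul, norm_pow, norm_inv, Real.norm_eq_abs, Real.norm_eq_abs,
          abs_of_pos (hc.trans ht)]
        calc |f t| * t⁻¹ ^ 2 ≤ (a + b * t⁻¹) * t⁻¹ ^ 2 := by gcongr; exact hf t ht
          _ = a * t⁻¹ ^ 2 + b * t⁻¹ ^ 3 := by ring
    _ = a * c⁻¹ + b * c⁻¹ ^ 2 / 2 := by
        rw [integral_add hint2 hint3, integral_const_mul,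
          integral_const_mul, integral_Ioi_inv_pow hc 0, integral_Ioi_inv_pow hc 1]
        norm_num
        ring

/-- exponential smallness of the tail integral
`∫_r^∞ Φ_U(r,τ) τ⁻² r dτ` for the logarithmic barrier. -/
theorem log_barrier_tail_estimate (U : ℝ → ℝ)
    (hU_bdd : ∀ r : ℝ, 0 ≤ r → 0 ≤ U r ∧ U r ≤ U 0)
    (hU_eq : ∀ r : ℝ, 1 < r → U r = 1 / (r * Real.log (Real.exp 1 * r)))
    (r : ℝ) (hr : Real.exp 2 < r) :
    |∫ τ in Set.Ioi r,
        (U r - U (r * τ) + (U r - U (r / τ)) / τ) * τ⁻¹ ^ 2 * r| ≤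
      (1 + U 0 / 2) * Real.exp (-(1 / (1 / Real.log r))) := by
  have hr1 : 1 < r := (one_lt_exp_iff.2 two_pos).trans hr
  have hr0 : 0 < r := one_pos.trans hr1
  have hU_le_inv : ∀ s : ℝ, 1 < s → U s ≤ s⁻¹ := fun s hs =>
    (hU_eq s hs).trans_le (one_div_mul_log_exp_one_mul_le_inv hs.le)
  have htail := abs_integral_Ioi_mul_inv_sq_le hr0
    (fun τ hτ => abs_barrierPhi_le hU_bdd hU_le_inv hr1 hτ.le)
  rw [one_div_one_div, exp_neg, exp_log hr0, integral_mul_const, abs_mul, abs_of_pos hr0]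
  calc |∫ τ in Ioi r, barrierPhi U r τ * τ⁻¹ ^ 2| * r
      ≤ (r⁻¹ * r⁻¹ + U 0 * r⁻¹ ^ 2 / 2) * r := by gcongr
    _ = (1 + U 0 / 2) * r⁻¹ := by field_simp
end
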